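/- arXiv:2101.00277 — 5 statements merged into one kernel-verified Lean document; each statement's English description precedes it below -/
import Mathlib

section
/- Let Φ be an irreducible positive recurrent DTMC with π^T|g| < ∞. Then for any states i, j, the expected absolute additive functional E_i[Σ_{k=0}^{τ_j−1} |g(Φ_k)|] is finite; in particular the solution f_j(i) of Poisson's equation given by the first-return-time representation is finite for all i. -/
open MeasureTheory Filter Topology

/-- First return time to state `j` along a discrete path (junk value `0` if no return). -/
noncomputable def hitTime (j : ℕ) (ω : ℕ → ℕ) : ℕ := sInf {k | 1 ≤ k ∧ ω k = j}

/-- Additive functional `ζ_j(g)(ω) = ∑_{k=0}^{τ_j-1} g(ω_k)`. -/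
noncomputable def addF (g : ℕ → ℝ) (j : ℕ) (ω : ℕ → ℕ) : ℝ :=
  ∑ k ∈ Finset.range (hitTime j ω), g (ω k)

/-- Matrix powers of a transition kernel on `ℕ`. -/
noncomputable def matPow (P : ℕ → ℕ → ℝ) : ℕ → ℕ → ℕ → ℝ
  | 0 => fun i k => if i = k then 1 else 0
  | n + 1 => fun i k => ∑' m, matPow P n i m * P m k

def MCStochastic (P : ℕ → ℕ → ℝ) : Prop :=
  (∀ i k, 0 ≤ P i k) ∧ ∀ i, HasSum (P i) 1

def MCIrreducible (P : ℕ → ℕ → ℝ) : Prop := ∀ i k, ∃ n, 0 < matPow P n i k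

/-- `μ i` is the law on path space of the Markov chain with kernel `P` started at `i`. -/
def MCChainLaw (P : ℕ → ℕ → ℝ) (μ : ℕ → Measure (ℕ → ℕ)) : Prop :=
  (∀ i, IsProbabilityMeasure (μ i)) ∧
  ∀ i n (s : ℕ → ℕ), s 0 = i →
    μ i {ω | ∀ k ≤ n, ω k = s k} =
      ENNReal.ofReal (∏ k ∈ Finset.range n, P (s k) (s (k + 1)))

/-- Sure return to every state, with finite mean return times. -/
def MCPositiveRecurrent (μ : ℕ → Measure (ℕ → ℕ)) : Prop :=
  ∀ i j, μ i {ω | ∃ k, 1 ≤ k ∧ ω k = j} = 1 ∧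
    Integrable (fun ω => (hitTime j ω : ℝ)) (μ j)

/-- `π` is an invariant probability vector for `P`. -/
def MCInvariant (P : ℕ → ℕ → ℝ) (π : ℕ → ℝ) : Prop :=
  (∀ i, 0 ≤ π i) ∧ HasSum π 1 ∧ ∀ k, HasSum (fun i => π i * P i k) (π k)

/-!
For `G ≥ 0` the expectation `E_i[∑_{k<τ_j} G(Φ_k)]` equals `∑_m G(m) ∑_k ⱼPᵏ(i, m)`, where `ⱼPᵏ` are
the taboo probabilities of avoiding `j` at times `1, …, k`. Invariance of `π` gives
`π_j ∑_k ⱼPᵏ(j, m) ≤ π_m`, and `π_j > 0` by irreducibility, so for `i = j` the sum is at most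
`π^T G / π_j`. For another start `i`, irreducibility yields `r` with `ⱼPʳ(j, i) > 0`, and splicing an
excursion through `i` gives `ⱼPʳ(j, i) ∑_k ⱼPᵏ(i, m) ≤ ∑_k ⱼPᵏ(j, m)`. The centred functional is
dominated by the one for `|g| + |π^T g|`.
-/

open scoped ENNReal

section Invariant

variable {P : ℕ → ℕ → ℝ} {π : ℕ → ℝ}

theorem matPow_nonneg (hP : MCStochastic P) : ∀ n i k, 0 ≤ matPow P n i k
  | 0, i, k => by simp only [matPow]; positivity
  | n + 1, i, k => tsum_nonneg fun m => mul_nonneg (matPow_nonneg hP n i m) (hP.1 m k)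

theorem MCInvariant.mul_matPow_le (hinv : MCInvariant P π) (hP : MCStochastic P) (i : ℕ) :
    ∀ n k, π i * matPow P n i k ≤ π k
  | 0, k => by
    simp only [matPow]
    split_ifs with h
    · rw [h, mul_one]
    · rw [mul_zero]; exact hinv.1 k
  | n + 1, k => by
    have hle : ∀ m, π i * matPow P n i m * P m k ≤ π m * P m k := fun m =>
      mul_le_mul_of_nonneg_right (hinv.mul_matPow_le hP i n m) (hP.1 m k)
    have hsum := hinv.2.2 k
    calc π i * matPow P (n + 1) i k = ∑' m, π i * matPow P n i m * P m k := by
          simp only [matPow, ← tsum_mul_left, mul_assoc]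
      _ ≤ ∑' m, π m * P m k :=
          Summable.tsum_le_tsum hle (hsum.summable.of_nonneg_of_le (fun m =>
            mul_nonneg (mul_nonneg (hinv.1 i) (matPow_nonneg hP n i m)) (hP.1 m k)) hle)
            hsum.summable
      _ = π k := hsum.tsum_eq

theorem MCInvariant.pos (hinv : MCInvariant P π) (hP : MCStochastic P) (hirr : MCIrreducible P)
    (k : ℕ) : 0 < π k := by
  obtain ⟨i, hi⟩ : ∃ i, 0 < π i := by
    by_contra! h
    have hzero : π = 0 := funext fun i => le_antisymm (h i) (hinv.1 i)
    simpa [hzero] using hinv.2.1.tsum_eq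
  obtain ⟨n, hn⟩ := hirr i k
  exact (mul_pos hi hn).trans_le (hinv.mul_matPow_le hP i n k)

theorem MCInvariant.tsum_ofReal_mul (hinv : MCInvariant P π) (hP : MCStochastic P) (m : ℕ) :
    ∑' x, ENNReal.ofReal (π x) * ENNReal.ofReal (P x m) = ENNReal.ofReal (π m) := by
  simp only [← ENNReal.ofReal_mul (hinv.1 _)]
  rw [← ENNReal.ofReal_tsum_of_nonneg (fun x => mul_nonneg (hinv.1 x) (hP.1 x m))
    (hinv.2.2 m).summable, (hinv.2.2 m).tsum_eq]

end Invariant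

/-- `taboo P j k i m` is the taboo probability `ⱼPᵏ(i, m)` of being at `m` at time `k`, starting
from `i`, without visiting `j` at times `1, …, k`. -/
noncomputable def taboo (P : ℕ → ℕ → ℝ) (j : ℕ) : ℕ → ℕ → ℕ → ℝ≥0∞
  | 0 => fun i m => if i = m then 1 else 0
  | k + 1 => fun i m => if m = j then 0 else ∑' x, taboo P j k i x * ENNReal.ofReal (P x m)

section Taboo

variable {P : ℕ → ℕ → ℝ} {π : ℕ → ℝ} {j : ℕ}

theorem taboo_zero (i m : ℕ) : taboo P j 0 i m = if i = m then 1 else 0 := rfl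

theorem taboo_succ (k i m : ℕ) :
    taboo P j (k + 1) i m = if m = j then 0 else ∑' x, taboo P j k i x * ENNReal.ofReal (P x m) :=
  rfl

theorem MCInvariant.ofReal_mul_sum_taboo_le (hinv : MCInvariant P π) (hP : MCStochastic P) :
    ∀ N m, ENNReal.ofReal (π j) * ∑ k ∈ Finset.range N, taboo P j k j m ≤ ENNReal.ofReal (π m)
  | 0, m => by simp
  | N + 1, m => by
    by_cases hm : m = j
    · subst hm
      have hexc : ∑ k ∈ Finset.range (N + 1), taboo P m k m m = 1 := by
        simp [Finset.sum_range_succ', taboo_succ, taboo_zero]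
      rw [hexc, mul_one]
    calc ENNReal.ofReal (π j) * ∑ k ∈ Finset.range (N + 1), taboo P j k j m
        = ∑' x, (ENNReal.ofReal (π j) * ∑ k ∈ Finset.range N, taboo P j k j x) *
            ENNReal.ofReal (P x m) := by
          simp only [Finset.sum_range_succ', taboo_succ, taboo_zero, if_neg hm,
            if_neg (Ne.symm hm), add_zero, Finset.mul_sum, Finset.sum_mul, mul_assoc,
            ← ENNReal.tsum_mul_left]
          rw [Summable.tsum_finsetSum fun _ _ => ENNReal.summable]
      _ ≤ ∑' x, ENNReal.ofReal (π x) * ENNReal.ofReal (P x m) :=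
          ENNReal.tsum_le_tsum fun x => by gcongr; exact hinv.ofReal_mul_sum_taboo_le hP N x
      _ = ENNReal.ofReal (π m) := hinv.tsum_ofReal_mul hP m

theorem MCInvariant.ofReal_mul_tsum_taboo_le (hinv : MCInvariant P π) (hP : MCStochastic P)
    (m : ℕ) : ENNReal.ofReal (π j) * ∑' k, taboo P j k j m ≤ ENNReal.ofReal (π m) := by
  rw [← ENNReal.tsum_mul_left]
  exact ENNReal.tsum_le_of_sum_range_le fun N => by
    rw [← Finset.mul_sum]; exact hinv.ofReal_mul_sum_taboo_le hP N m

theorem exists_taboo_pos (hP : MCStochastic P) :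
    ∀ n i, 0 < matPow P n j i → ∃ r, 0 < taboo P j r j i
  | 0, i, h => ⟨0, by
      by_cases hji : j = i <;> simp_all [matPow, taboo_zero]⟩
  | n + 1, i, h => by
    obtain ⟨m, hm⟩ : ∃ m, matPow P n j m * P m i ≠ 0 := by
      by_contra! hzero
      simp [matPow, hzero] at h
    obtain ⟨hnm, hmi⟩ := mul_ne_zero_iff.1 hm
    obtain ⟨r, hr⟩ := exists_taboo_pos hP n m ((matPow_nonneg hP n j m).lt_of_ne' hnm)
    by_cases hij : i = j
    · exact ⟨0, by simp [taboo_zero, hij]⟩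
    refine ⟨r + 1, ?_⟩
    rw [taboo_succ, if_neg hij]
    refine lt_of_lt_of_le ?_ (ENNReal.le_tsum m)
    exact ENNReal.mul_pos hr.ne' (ENNReal.ofReal_pos.2 ((hP.1 m i).lt_of_ne' hmi)).ne'

theorem taboo_mul_taboo_le (r i : ℕ) :
    ∀ k m, taboo P j r j i * taboo P j k i m ≤ taboo P j (r + k) j m
  | 0, m => by
    rw [taboo_zero]
    split_ifs with h
    · rw [h, mul_one, add_zero]
    · rw [mul_zero]; exact zero_le
  | k + 1, m => by
    rw [← add_assoc, taboo_succ, taboo_succ]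
    split_ifs
    · rw [mul_zero]
    · rw [← ENNReal.tsum_mul_left]
      refine ENNReal.tsum_le_tsum fun x => ?_
      rw [← mul_assoc]
      exact mul_le_mul_left (taboo_mul_taboo_le r i k x) _

theorem taboo_mul_tsum_taboo_le (r i m : ℕ) :
    taboo P j r j i * ∑' k, taboo P j k i m ≤ ∑' k, taboo P j k j m := by
  rw [← ENNReal.tsum_mul_left]
  calc ∑' k, taboo P j r j i * taboo P j k i m ≤ ∑' k, taboo P j (r + k) j m :=
        ENNReal.tsum_le_tsum fun k => taboo_mul_taboo_le r i k m
    _ ≤ ∑' k, taboo P j k j m :=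
        ENNReal.tsum_comp_le_tsum_of_injective (add_right_injective r) _

theorem tsum_mul_tsum_taboo_lt_top (hP : MCStochastic P) (hirr : MCIrreducible P)
    (hinv : MCInvariant P π) {G : ℕ → ℝ≥0∞} (hG : ∑' m, ENNReal.ofReal (π m) * G m ≠ ⊤)
    (i : ℕ) : ∑' m, G m * ∑' k, taboo P j k i m < ⊤ := by
  obtain ⟨n, hn⟩ := hirr j i
  obtain ⟨r, hr⟩ := exists_taboo_pos hP n i hn
  have hbound : ENNReal.ofReal (π j) * taboo P j r j i * ∑' m, G m * ∑' k, taboo P j k i m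
      ≤ ∑' m, ENNReal.ofReal (π m) * G m := by
    rw [← ENNReal.tsum_mul_left]
    refine ENNReal.tsum_le_tsum fun m => ?_
    calc ENNReal.ofReal (π j) * taboo P j r j i * (G m * ∑' k, taboo P j k i m)
        = G m * (ENNReal.ofReal (π j) * (taboo P j r j i * ∑' k, taboo P j k i m)) := by ring
      _ ≤ G m * (ENNReal.ofReal (π j) * ∑' k, taboo P j k j m) := by
          gcongr; exact taboo_mul_tsum_taboo_le r i m
      _ ≤ G m * ENNReal.ofReal (π m) := by gcongr; exact hinv.ofReal_mul_tsum_taboo_le hP m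
      _ = ENNReal.ofReal (π m) * G m := mul_comm _ _
  refine ENNReal.lt_top_of_mul_ne_top_right (ne_top_of_le_ne_top hG hbound) ?_
  exact mul_ne_zero (ENNReal.ofReal_pos.2 (hinv.pos hP hirr j)).ne' hr.ne'

end Taboo

theorem lt_hitTime_iff {j k : ℕ} {ω : ℕ → ℕ} :
    k < hitTime j ω ↔ (∃ l, 1 ≤ l ∧ ω l = j) ∧ ∀ l, 1 ≤ l → l ≤ k → ω l ≠ j := by
  constructor
  · intro h
    have hret : {l | 1 ≤ l ∧ ω l = j}.Nonempty := by
      by_contra hempty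
      rw [Set.not_nonempty_iff_eq_empty] at hempty
      simp [hitTime, hempty] at h
    refine ⟨hret, fun l hl hlk hlj => ?_⟩
    have : hitTime j ω ≤ l := Nat.sInf_le ⟨hl, hlj⟩
    omega
  · rintro ⟨hret, havoid⟩
    have hmem := Nat.sInf_mem hret
    by_contra! hk
    exact havoid _ hmem.1 hk hmem.2

theorem measurableSet_eval_eq (k m : ℕ) : MeasurableSet {ω : ℕ → ℕ | ω k = m} :=
  (measurableSet_singleton m).preimage (measurable_pi_apply k)

theorem measurableSet_returns (j : ℕ) : MeasurableSet {ω : ℕ → ℕ | ∃ l, 1 ≤ l ∧ ω l = j} := by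
  simp only [Set.ofPred_exists, Set.ofPred_and]
  exact MeasurableSet.iUnion fun l => (MeasurableSet.const _).inter (measurableSet_eval_eq l j)

theorem measurableSet_lt_hitTime (j k : ℕ) : MeasurableSet {ω : ℕ → ℕ | k < hitTime j ω} := by
  simp only [lt_hitTime_iff, Set.ofPred_and, Set.ofPred_forall]
  exact (measurableSet_returns j).inter <| MeasurableSet.iInter fun l =>
    MeasurableSet.iInter fun _ => MeasurableSet.iInter fun _ => (measurableSet_eval_eq l j).compl

theorem measurable_hitTime (j : ℕ) : Measurable (hitTime j) :=
  measurable_of_Ioi fun k => measurableSet_lt_hitTime j k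

theorem measurable_addF (f : ℕ → ℝ) (j : ℕ) : Measurable (addF f j) := by
  have hsum : Measurable fun p : (ℕ → ℕ) × ℕ => ∑ k ∈ Finset.range p.2, f (p.1 k) :=
    measurable_from_prod_countable_left fun n => by
      exact Finset.measurable_sum (Finset.range n) fun k _ =>
        (measurable_from_top (f := f)).comp (measurable_pi_apply k)
  exact hsum.comp (measurable_id.prodMk (measurable_hitTime j))

def pathPrefix (k : ℕ) (ω : ℕ → ℕ) : Fin (k + 1) → ℕ := fun t => ω t

noncomputable def pathWeight (P : ℕ → ℕ → ℝ) (i k : ℕ) (v : Fin (k + 1) → ℕ) : ℝ≥0∞ :=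
  (if v 0 = i then 1 else 0) * ∏ t : Fin k, ENNReal.ofReal (P (v t.castSucc) (v t.succ))

theorem measurable_pathPrefix (k : ℕ) : Measurable (pathPrefix k) :=
  measurable_pi_lambda _ fun t => measurable_pi_apply (t : ℕ)

theorem pathWeight_snoc (P : ℕ → ℕ → ℝ) (i k : ℕ) (u : Fin (k + 1) → ℕ) (x : ℕ) :
    pathWeight P i (k + 1) (Fin.snoc u x) =
      pathWeight P i k u * ENNReal.ofReal (P (u (Fin.last k)) x) := by
  have h0 : (Fin.snoc u x : Fin (k + 2) → ℕ) 0 = u 0 := Fin.snoc_castSucc (α := fun _ => ℕ) x u 0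
  have hsucc : ∀ t : Fin k, (Fin.snoc u x : Fin (k + 2) → ℕ) t.castSucc.succ = u t.succ :=
    fun t => by rw [Fin.succ_castSucc, Fin.snoc_castSucc]
  simp [pathWeight, Fin.prod_univ_castSucc, h0, hsucc]

section PathMeasure

variable {P : ℕ → ℕ → ℝ} {μ : ℕ → Measure (ℕ → ℕ)}

theorem MCChainLaw.measure_eval_zero (hchain : MCChainLaw P μ) (i m : ℕ) :
    μ i {ω | ω 0 = m} = if i = m then 1 else 0 := by
  have hstart : μ i {ω | ω 0 = i} = 1 := by simpa using hchain.2 i 0 (fun _ => i) rfl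
  split_ifs with h
  · rw [← h, hstart]
  · have := hchain.1 i
    refine measure_mono_null (t := {ω | ω 0 = i}ᶜ)
      (fun ω (hω : ω 0 = m) (hi : ω 0 = i) => h (hi.symm.trans hω)) ?_
    rwa [prob_compl_eq_zero_iff (measurableSet_eval_eq 0 i)]

theorem MCChainLaw.measure_pathPrefix_preimage_singleton (hchain : MCChainLaw P μ)
    (hP : MCStochastic P) (i k : ℕ) (v : Fin (k + 1) → ℕ) :
    μ i (pathPrefix k ⁻¹' {v}) = pathWeight P i k v := by
  by_cases hv : v 0 = i
  · set s : ℕ → ℕ := fun t => if h : t < k + 1 then v ⟨t, h⟩ else 0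
    have hcyl : pathPrefix k ⁻¹' {v} = {ω | ∀ t ≤ k, ω t = s t} := by
      ext ω
      simp +contextual [pathPrefix, s, funext_iff, Fin.forall_iff]
    rw [hcyl, hchain.2 i k s (by simpa [s] using hv),
      ENNReal.ofReal_prod_of_nonneg fun t _ => hP.1 _ _, ← Fin.prod_univ_eq_prod_range,
      pathWeight, if_pos hv, one_mul]
    refine Finset.prod_congr rfl fun t _ => ?_
    have hcur : s t = v t.castSucc := dif_pos (by omega)
    have hnext : s (t + 1) = v t.succ := dif_pos (by omega)
    rw [hcur, hnext]
  · rw [pathWeight, if_neg hv, zero_mul]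
    refine measure_mono_null (fun ω (hω : pathPrefix k ω = v) => ?_)
      ((hchain.measure_eval_zero i (v 0)).trans (if_neg (Ne.symm hv)))
    exact congrFun hω 0

theorem MCChainLaw.measure_pathPrefix_preimage (hchain : MCChainLaw P μ) (hP : MCStochastic P)
    (i k : ℕ) (A : Set (Fin (k + 1) → ℕ)) :
    μ i (pathPrefix k ⁻¹' A) = ∑' v, A.indicator (pathWeight P i k) v := by
  rw [← tsum_measure_preimage_singleton A.to_countable
    fun v _ => measurable_pathPrefix k (measurableSet_singleton v), ← tsum_subtype]
  exact tsum_congr fun v => hchain.measure_pathPrefix_preimage_singleton hP i k v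

theorem MCChainLaw.measure_pathPrefix_mem_eval_succ (hchain : MCChainLaw P μ)
    (hP : MCStochastic P) (i k : ℕ) (A : Set (Fin (k + 1) → ℕ)) (m : ℕ) :
    μ i {ω | pathPrefix k ω ∈ A ∧ ω (k + 1) = m} =
      ∑' x, μ i {ω | pathPrefix k ω ∈ A ∧ ω k = x} * ENNReal.ofReal (P x m) := by
  classical
  have hlhs : {ω | pathPrefix k ω ∈ A ∧ ω (k + 1) = m} =
      pathPrefix (k + 1) ⁻¹' {w | Fin.init w ∈ A ∧ w (Fin.last (k + 1)) = m} := rfl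
  have hrhs : ∀ x, {ω | pathPrefix k ω ∈ A ∧ ω k = x} =
      pathPrefix k ⁻¹' {u | u ∈ A ∧ u (Fin.last k) = x} := fun x => rfl
  have hsnoc : ∀ x (u : Fin (k + 1) → ℕ), (Fin.snocEquiv fun _ => ℕ) (x, u) = Fin.snoc u x :=
    fun _ _ => rfl
  simp only [hlhs, hrhs, hchain.measure_pathPrefix_preimage hP]
  conv_lhs => rw [← (Fin.snocEquiv fun _ => ℕ).tsum_eq, ENNReal.tsum_prod', ENNReal.tsum_comm]
  conv_rhs => simp only [← ENNReal.tsum_mul_right]; rw [ENNReal.tsum_comm]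
  refine tsum_congr fun u => ?_
  simp only [Set.indicator_apply, Set.mem_ofPred_eq, hsnoc, Fin.init_snoc,
    Fin.snoc_last, pathWeight_snoc, ite_mul, zero_mul]
  by_cases hu : u ∈ A <;> simp [hu]

end PathMeasure

section Occupation

variable {P : ℕ → ℕ → ℝ} {μ : ℕ → Measure (ℕ → ℕ)} {π : ℕ → ℝ} {j : ℕ}

theorem MCChainLaw.measure_avoid_eq_taboo (hchain : MCChainLaw P μ) (hP : MCStochastic P)
    (i : ℕ) : ∀ k m, μ i {ω | (∀ l, 1 ≤ l → l ≤ k → ω l ≠ j) ∧ ω k = m} = taboo P j k i m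
  | 0, m => by
    have hset : {ω : ℕ → ℕ | (∀ l, 1 ≤ l → l ≤ 0 → ω l ≠ j) ∧ ω 0 = m} = {ω | ω 0 = m} := by
      ext ω
      simp only [Set.mem_ofPred_eq, and_iff_right_iff_imp]
      intro _ l h1 h0
      omega
    rw [hset, hchain.measure_eval_zero, taboo_zero]
  | k + 1, m => by
    rw [taboo_succ]
    split_ifs with hm
    · rw [← measure_empty (μ := μ i)]
      congr 1
      ext ω
      simp only [Set.mem_ofPred_eq, Set.mem_empty_iff_false, iff_false, not_and]
      exact fun havoid hω => havoid (k + 1) (by omega) le_rfl (hω.trans hm)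
    set avoid : Set (Fin (k + 1) → ℕ) := {u | ∀ l : Fin (k + 1), 1 ≤ (l : ℕ) → u l ≠ j}
    have hprefix : ∀ ω, pathPrefix k ω ∈ avoid ↔ ∀ l, 1 ≤ l → l ≤ k → ω l ≠ j := fun ω =>
      ⟨fun h l h1 hlk => h ⟨l, by omega⟩ h1, fun h l h1 => h l h1 (by omega)⟩
    have hset : {ω | (∀ l, 1 ≤ l → l ≤ k + 1 → ω l ≠ j) ∧ ω (k + 1) = m} =
        {ω | pathPrefix k ω ∈ avoid ∧ ω (k + 1) = m} := by
      ext ω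
      simp only [Set.mem_ofPred_eq, hprefix]
      refine and_congr_left fun hω => ⟨fun h l h1 hlk => h l h1 (by omega), fun h l h1 hlk => ?_⟩
      rcases hlk.lt_or_eq with hlk | rfl
      · exact h l h1 (by omega)
      · rw [hω]; exact hm
    rw [hset, hchain.measure_pathPrefix_mem_eval_succ hP]
    simp only [hprefix, hchain.measure_avoid_eq_taboo hP i k]

theorem MCChainLaw.measure_lt_hitTime_eq_taboo (hchain : MCChainLaw P μ) (hP : MCStochastic P)
    (hret : ∀ i, μ i {ω | ∃ l, 1 ≤ l ∧ ω l = j} = 1) (i k m : ℕ) :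
    μ i {ω | k < hitTime j ω ∧ ω k = m} = taboo P j k i m := by
  -- `hitTime j ω = 0` on paths that never return to `j`; these form a null set.
  have hset : {ω | k < hitTime j ω ∧ ω k = m} =
      {ω | (∀ l, 1 ≤ l → l ≤ k → ω l ≠ j) ∧ ω k = m} ∩ {ω | ∃ l, 1 ≤ l ∧ ω l = j} := by
    ext ω
    simp only [Set.mem_ofPred_eq, Set.mem_inter_iff, lt_hitTime_iff]
    tauto
  have := hchain.1 i
  rw [hset, measure_inter_conull ((prob_compl_eq_zero_iff (measurableSet_returns j)).2 (hret i)),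
    hchain.measure_avoid_eq_taboo hP]

theorem MCChainLaw.lintegral_sum_range_hitTime (hchain : MCChainLaw P μ) (hP : MCStochastic P)
    (hret : ∀ i, μ i {ω | ∃ l, 1 ≤ l ∧ ω l = j} = 1) (G : ℕ → ℝ≥0∞) (i : ℕ) :
    ∫⁻ ω, ∑ k ∈ Finset.range (hitTime j ω), G (ω k) ∂μ i =
      ∑' m, G m * ∑' k, taboo P j k i m := by
  set visit : ℕ → ℕ → Set (ℕ → ℕ) := fun k m => {ω | k < hitTime j ω ∧ ω k = m}
  have hvisit : ∀ k m, MeasurableSet (visit k m) := fun k m =>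
    (measurableSet_lt_hitTime j k).inter (measurableSet_eval_eq k m)
  have hpt : ∀ ω, ∑ k ∈ Finset.range (hitTime j ω), G (ω k) =
      ∑' k, ∑' m, (visit k m).indicator (fun _ => G m) ω := by
    intro ω
    rw [sum_eq_tsum_indicator]
    refine tsum_congr fun k => ?_
    simp only [visit, Set.indicator_apply, Set.mem_ofPred_eq, Finset.coe_range, Set.mem_Iio]
    split_ifs with hk <;> simp [hk, eq_comm]
  simp only [hpt]
  rw [lintegral_tsum fun k => (Measurable.tsum fun m =>
    measurable_const.indicator (hvisit k m)).aemeasurable]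
  simp only [lintegral_tsum fun m => (measurable_const.indicator (hvisit _ m)).aemeasurable,
    lintegral_indicator_const (hvisit _ _), visit, hchain.measure_lt_hitTime_eq_taboo hP hret]
  rw [ENNReal.tsum_comm]
  simp only [ENNReal.tsum_mul_left]

theorem integrable_addF (hP : MCStochastic P) (hirr : MCIrreducible P) (hchain : MCChainLaw P μ)
    (hret : ∀ i, μ i {ω | ∃ l, 1 ≤ l ∧ ω l = j} = 1) (hinv : MCInvariant P π) {f : ℕ → ℝ}
    (hf : 0 ≤ f) (hπf : Summable fun m => π m * f m) (i : ℕ) : Integrable (addF f j) (μ i) := by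
  refine ⟨(measurable_addF f j).aestronglyMeasurable, ?_⟩
  rw [hasFiniteIntegral_iff_ofReal (f := addF f j)
    (ae_of_all _ fun ω => Finset.sum_nonneg fun k _ => hf _)]
  simp only [addF, ENNReal.ofReal_sum_of_nonneg fun k _ => hf _]
  rw [hchain.lintegral_sum_range_hitTime hP hret fun m => ENNReal.ofReal (f m)]
  refine tsum_mul_tsum_taboo_lt_top hP hirr hinv ?_ i
  simp only [← ENNReal.ofReal_mul (hinv.1 _)]
  rw [← ENNReal.ofReal_tsum_of_nonneg (fun m => mul_nonneg (hinv.1 m) (hf m)) hπf]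
  exact ENNReal.ofReal_ne_top

end Occupation

/-- For an irreducible positive recurrent DTMC with `π^T|g| < ∞`,
the expected absolute additive functional `E_i[∑_{k=0}^{τ_j-1} |g(Φ_k)|]` is finite for
all states `i, j`; in particular the first-return-time representation of the solution of
Poisson's equation is (integrable, hence) finite for all `i`. -/
theorem additive_functional_finite
    (P : ℕ → ℕ → ℝ) (μ : ℕ → Measure (ℕ → ℕ)) (π g : ℕ → ℝ)
    (hP : MCStochastic P) (hirr : MCIrreducible P) (hchain : MCChainLaw P μ)
    (hrec : MCPositiveRecurrent μ) (hinv : MCInvariant P π)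
    (hg : Summable fun i => π i * |g i|) :
    (∀ i j, (∫⁻ ω, ENNReal.ofReal (addF (fun x => |g x|) j ω) ∂ μ i) < ⊤) ∧
    (∀ i j, Integrable (fun ω => addF (fun x => g x - ∑' m, π m * g m) j ω) (μ i)) := by
  have hint : ∀ {f : ℕ → ℝ}, 0 ≤ f → Summable (fun m => π m * f m) →
      ∀ i j, Integrable (addF f j) (μ i) := fun hf hπf i j =>
    integrable_addF hP hirr hchain (fun i => (hrec i j).1) hinv hf hπf i
  set c := ∑' m, π m * g m
  refine ⟨fun i j => (hint (fun x => abs_nonneg (g x)) hg i j).lintegral_lt_top, fun i j => ?_⟩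
  have hπbound : Summable fun m => π m * (|g m| + |c|) := by
    simpa only [mul_add] using hg.add (hinv.2.1.summable.mul_right |c|)
  refine (hint (fun x => by positivity) hπbound i j).mono'
    (measurable_addF _ j).aestronglyMeasurable (ae_of_all _ fun ω => ?_)
  exact (Finset.abs_sum_le_sum_abs _ _).trans (Finset.sum_le_sum fun k _ => abs_sub _ _)
end

section
/- For the censored Markov chain on {0,…,n} obtained from an irreducible recurrent DTMC Φ, for every initial state i and every fixed state j ≤ n, the first return times are monotone in n along each sample path: _{(n)}τ_j(ω) ≤ _{(n+1)}τ_j(ω) ≤ τ_j(ω), and _{(n)}τ_j(ω) ↑ τ_j(ω) < ∞ almost surely as n → ∞. -/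
open MeasureTheory Filter Topology

/-- The censored (watched) path on `{0,…,n}`: the original path observed only at the
successive times it visits `{0,…,n}`. -/
noncomputable def censor (n : ℕ) (ω : ℕ → ℕ) : ℕ → ℕ :=
  fun k => ω (Nat.nth (fun m => ω m ≤ n) k)

/-!
The censored path visits `{0,…,n}` at the times `Nat.nth (· ≤ n)`, so a time `m` at which `ω`
is in `{0,…,n}` becomes the censored index `Nat.count (· ≤ n) m`. When the path starts in
`{0,…,n}` and `j ≤ n`, the first return of the censored path to `j` is therefore the image of
the first return `τ` of `ω`, at index `Nat.count (· ≤ n) τ`. This count is at most `τ`, grows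
with `n`, and equals `τ` as soon as `n` bounds `ω` on `[0, τ)`. Recurrence and the chain law
make `τ < ∞` and `ω 0 = i` almost surely.
-/

section CensoredPath

variable {j n : ℕ} {ω : ℕ → ℕ}

theorem hitTime_censor_eq_count (h0 : ω 0 ≤ n) (hj : j ≤ n) (hret : ∃ k, 1 ≤ k ∧ ω k = j) :
    hitTime j (censor n ω) = Nat.count (fun m => ω m ≤ n) (hitTime j ω) := by
  set p : ℕ → Prop := fun m => ω m ≤ n
  obtain ⟨hτ_pos, hτ_eq⟩ : 1 ≤ hitTime j ω ∧ ω (hitTime j ω) = j := Nat.sInf_mem hret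
  set τ := hitTime j ω
  have hcount_pos : 1 ≤ Nat.count p τ :=
    calc 1 = Nat.count p 1 := by simp [Nat.count_one, p, h0]
      _ ≤ Nat.count p τ := Nat.count_monotone p hτ_pos
  have hmem : Nat.count p τ ∈ {k | 1 ≤ k ∧ censor n ω k = j} := by
    refine ⟨hcount_pos, ?_⟩
    rw [censor, Nat.nth_count (show p τ by simp [p, hτ_eq, hj]), hτ_eq]
  refine le_antisymm (Nat.sInf_le hmem) (le_csInf ⟨_, hmem⟩ ?_)
  rintro k ⟨hk_pos, hk_eq⟩
  rw [censor] at hk_eq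
  by_contra! hk_lt
  have hcount_nth : Nat.count p (Nat.nth p k) = k :=
    Nat.count_nth fun hf => hk_lt.trans_le (Nat.count_le_card hf τ)
  have hnth_pos : 1 ≤ Nat.nth p k := by
    by_contra! h
    rw [Nat.lt_one_iff.mp h, Nat.count_zero] at hcount_nth
    omega
  exact (Nat.nth_lt_of_lt_count hk_lt).not_ge (Nat.sInf_le ⟨hnth_pos, hk_eq⟩)

theorem hitTime_censor_mono {n' : ℕ} (h0 : ω 0 ≤ n) (hj : j ≤ n) (hn : n ≤ n')
    (hret : ∃ k, 1 ≤ k ∧ ω k = j) :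
    hitTime j (censor n ω) ≤ hitTime j (censor n' ω) := by
  rw [hitTime_censor_eq_count h0 hj hret,
    hitTime_censor_eq_count (h0.trans hn) (hj.trans hn) hret]
  exact Nat.count_mono_left fun m _ hm => hm.trans hn

theorem hitTime_censor_le (h0 : ω 0 ≤ n) (hj : j ≤ n) (hret : ∃ k, 1 ≤ k ∧ ω k = j) :
    hitTime j (censor n ω) ≤ hitTime j ω := by
  rw [hitTime_censor_eq_count h0 hj hret]
  exact Nat.count_le _

theorem eventually_hitTime_censor_eq (hret : ∃ k, 1 ≤ k ∧ ω k = j) :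
    ∀ᶠ n in atTop, hitTime j (censor n ω) = hitTime j ω := by
  filter_upwards [eventually_ge_atTop (ω 0), eventually_ge_atTop j,
    eventually_ge_atTop ((Finset.range (hitTime j ω)).sup ω)] with n h0 hj hsup
  rw [hitTime_censor_eq_count h0 hj hret, Nat.count_iff_forall]
  exact fun m hm => (Finset.le_sup (Finset.mem_range.mpr hm)).trans hsup

theorem tendsto_hitTime_censor (hret : ∃ k, 1 ≤ k ∧ ω k = j) :
    Tendsto (fun n => hitTime j (censor n ω)) atTop (𝓝 (hitTime j ω)) :=
  tendsto_nhds_of_eventually_eq (eventually_hitTime_censor_eq hret)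

end CensoredPath

theorem MCChainLaw.ae_eq_start {P : ℕ → ℕ → ℝ} {μ : ℕ → Measure (ℕ → ℕ)} (h : MCChainLaw P μ)
    (i : ℕ) : ∀ᵐ ω ∂μ i, ω 0 = i := by
  have := h.1 i
  have hstart := h.2 i 0 (fun _ => i) rfl
  simp only [Nat.le_zero, forall_eq, Finset.range_zero, Finset.prod_empty,
    ENNReal.ofReal_one] at hstart
  exact (mem_ae_iff_prob_eq_one (by measurability)).mpr hstart

theorem ae_exists_return {μ : Measure (ℕ → ℕ)} [IsProbabilityMeasure μ] {j : ℕ}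
    (h : μ {ω | ∃ k, 1 ≤ k ∧ ω k = j} = 1) : ∀ᵐ ω ∂μ, ∃ k, 1 ≤ k ∧ ω k = j := by
  refine (mem_ae_iff_prob_eq_one ?_).mpr h
  measurability

theorem censored_return_times_monotone_general
    (P : ℕ → ℕ → ℝ) (μ : ℕ → Measure (ℕ → ℕ)) (j : ℕ)
    (hchain : MCChainLaw P μ)
    (hrec : ∀ i j', μ i {ω | ∃ k, 1 ≤ k ∧ ω k = j'} = 1) :
    ∀ i, ∀ᵐ ω ∂ μ i,
      (∀ n, max i j ≤ n →
        hitTime j (censor n ω) ≤ hitTime j (censor (n + 1) ω) ∧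
        hitTime j (censor (n + 1) ω) ≤ hitTime j ω) ∧
      Tendsto (fun n => hitTime j (censor n ω)) atTop (𝓝 (hitTime j ω)) ∧
      (∃ k, 1 ≤ k ∧ ω k = j) := by
  intro i
  have := hchain.1 i
  filter_upwards [hchain.ae_eq_start i, ae_exists_return (hrec i j)] with ω h0 hret
  refine ⟨fun n hn => ?_, tendsto_hitTime_censor hret, hret⟩
  have h0n : ω 0 ≤ n := h0 ▸ le_of_max_le_left hn
  have hjn : j ≤ n := le_of_max_le_right hn
  exact ⟨hitTime_censor_mono h0n hjn n.le_succ hret,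
    hitTime_censor_le (h0n.trans n.le_succ) (hjn.trans n.le_succ) hret⟩

/-- For the censored chain of an irreducible recurrent DTMC, the first
return times to `j` are monotone in `n` along almost every sample path,
`_{(n)}τ_j(ω) ≤ _{(n+1)}τ_j(ω) ≤ τ_j(ω)`, and `_{(n)}τ_j(ω) ↑ τ_j(ω) < ∞` a.s. -/
theorem censored_return_times_monotone
    (P : ℕ → ℕ → ℝ) (μ : ℕ → Measure (ℕ → ℕ)) (j : ℕ)
    (hP : MCStochastic P) (hirr : MCIrreducible P) (hchain : MCChainLaw P μ)
    (hrec : ∀ i j', μ i {ω | ∃ k, 1 ≤ k ∧ ω k = j'} = 1) :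
    ∀ i, ∀ᵐ ω ∂ μ i,
      (∀ n, max i j ≤ n →
        hitTime j (censor n ω) ≤ hitTime j (censor (n + 1) ω) ∧
        hitTime j (censor (n + 1) ω) ≤ hitTime j ω) ∧
      Tendsto (fun n => hitTime j (censor n ω)) atTop (𝓝 (hitTime j ω)) ∧
      (∃ k, 1 ≤ k ∧ ω k = j) :=
  censored_return_times_monotone_general P μ j hchain hrec
end

section
/- Consider the DTMC on ℤ≥0 with p_{i,i+1} = p_i ∈ (0,1), p_{i,0} = q_i = 1 − p_i and all other entries zero. If π^T|g| < ∞, then for the fixed state 0 the unique solution of Poisson's equation is f_0(0) = 0 and f_0(i) = (π^T g) Σ_{m=0}^{i−1} 1/∏_{k=m}^{i−1} p_k − Σ_{m=0}^{i−1} g(m)/∏_{k=m}^{i−1} p_k for i ≥ 1. -/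
/-!
From state `i` the chain either resets to `0` or moves to `i + 1`, so once `f 0 = 0` Poisson's
equation at `i` is the first-order linear recurrence `p i * f (i + 1) = f i + (πᵀg - g i)`.
Since every `p i` is nonzero, its solution with `f 0 = 0` is unique and given by variation of
constants, which is the stated formula.
-/

open Filter Topology

/-- The transition matrix with `p_{i,0} = q_i = 1 - p_i`, `p_{i,i+1} = p_i` and all other
entries zero. -/
noncomputable def birthResetP (p : ℕ → ℝ) : ℕ → ℕ → ℝ := fun i k =>
  if k = 0 then 1 - p i else if k = i + 1 then p i else 0

/-- `a_0 = 1`, `a_i = ∏_{k=0}^{i} p_k` for `i ≥ 1`. -/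
noncomputable def aSeq (p : ℕ → ℝ) : ℕ → ℝ := fun i =>
  if i = 0 then 1 else ∏ k ∈ Finset.range (i + 1), p k

/-- The invariant probability vector `π(i) = a_i / ∑_k a_k`. -/
noncomputable def piVec (p : ℕ → ℝ) : ℕ → ℝ := fun i => aSeq p i / ∑' k, aSeq p k

open Finset

noncomputable def linearRecurrenceSol (p c : ℕ → ℝ) (i : ℕ) : ℝ :=
  ∑ m ∈ range i, c m / ∏ k ∈ Ico m i, p k

section LinearRecurrence

variable {p : ℕ → ℝ}

@[simp]
lemma linearRecurrenceSol_zero (c : ℕ → ℝ) : linearRecurrenceSol p c 0 = 0 := by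
  simp [linearRecurrenceSol]

lemma mul_linearRecurrenceSol_succ (hp : ∀ i, p i ≠ 0) (c : ℕ → ℝ) (i : ℕ) :
    p i * linearRecurrenceSol p c (i + 1) = linearRecurrenceSol p c i + c i := by
  have hsplit : ∀ m ∈ range (i + 1),
      c m / ∏ k ∈ Ico m (i + 1), p k = c m / (∏ k ∈ Ico m i, p k) / p i := fun m hm => by
    rw [prod_Ico_succ_top (Nat.lt_succ_iff.mp (mem_range.mp hm)), div_mul_eq_div_div]
  rw [linearRecurrenceSol, sum_congr rfl hsplit, ← sum_div, mul_div_cancel₀ _ (hp i),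
    sum_range_succ, Ico_self, prod_empty, div_one, linearRecurrenceSol]

lemma eq_linearRecurrenceSol_iff (hp : ∀ i, p i ≠ 0) (c f : ℕ → ℝ) :
    f = linearRecurrenceSol p c ↔ f 0 = 0 ∧ ∀ i, p i * f (i + 1) = f i + c i := by
  refine ⟨?_, fun ⟨h0, hrec⟩ => funext fun i => ?_⟩
  · rintro rfl
    exact ⟨linearRecurrenceSol_zero c, mul_linearRecurrenceSol_succ hp c⟩
  induction i with
  | zero => rw [h0, linearRecurrenceSol_zero]
  | succ n ih => exact mul_left_cancel₀ (hp n) (by rw [hrec n, mul_linearRecurrenceSol_succ hp, ih])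

end LinearRecurrence

lemma birthResetP_tsum_mul (p f : ℕ → ℝ) (i : ℕ) :
    ∑' k, birthResetP p i k * f k = (1 - p i) * f 0 + p i * f (i + 1) := by
  rw [tsum_eq_sum (s := {0, i + 1}) fun k hk => ?_, sum_pair (Nat.succ_ne_zero i).symm]
  · simp [birthResetP]
  · simp only [mem_insert, mem_singleton, not_or] at hk
    simp [birthResetP, hk.1, hk.2]

theorem reset_chain_poisson_solution_general
    (p g : ℕ → ℝ)
    (hp : ∀ i, 0 < p i ∧ p i < 1) :
    ∀ f : ℕ → ℝ,
      ((∀ i, (∑' k, birthResetP p i k * f k) - f i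
          = -(g i - ∑' m, piVec p m * g m)) ∧ f 0 = 0)
      ↔ (f 0 = 0 ∧ ∀ i, 1 ≤ i →
          f i = (∑' m, piVec p m * g m)
              * (∑ m ∈ Finset.range i, (∏ k ∈ Finset.Ico m i, p k)⁻¹)
            - ∑ m ∈ Finset.range i, g m / ∏ k ∈ Finset.Ico m i, p k) := by
  intro f
  set G := ∑' m, piVec p m * g m
  have hpne : ∀ i, p i ≠ 0 := fun i => (hp i).1.ne'
  have hformula : ∀ i, G * (∑ m ∈ range i, (∏ k ∈ Ico m i, p k)⁻¹)
      - ∑ m ∈ range i, g m / ∏ k ∈ Ico m i, p k = linearRecurrenceSol p (fun m => G - g m) i := by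
    intro i
    simp only [linearRecurrenceSol, mul_sum, div_eq_mul_inv, ← sum_sub_distrib, sub_mul]
  simp only [hformula]
  calc _ ↔ f 0 = 0 ∧ ∀ i, p i * f (i + 1) = f i + (G - g i) := by
        rw [and_comm]
        refine and_congr_right fun h0 => forall_congr' fun i => ?_
        rw [birthResetP_tsum_mul, h0]
        constructor <;> intro h <;> linarith
    _ ↔ f = linearRecurrenceSol p (fun m => G - g m) := (eq_linearRecurrenceSol_iff hpne _ f).symm
    _ ↔ _ := by
        refine ⟨fun h => ⟨by simp [h], fun i _ => congrFun h i⟩, fun ⟨h0, h⟩ => funext fun i => ?_⟩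
        rcases i.eq_zero_or_pos with rfl | hi
        exacts [by simp [h0], h i hi]

/-- For the DTMC with `p_{i,i+1} = p_i ∈ (0,1)`, `p_{i,0} = 1 - p_i`,
if `π^T|g| < ∞` then the unique solution of Poisson's equation `(P - I)f = -(g - (π^T g)e)`
normalized by `f(0) = 0` is given by
`f(i) = (π^T g) ∑_{m=0}^{i-1} 1/∏_{k=m}^{i-1} p_k - ∑_{m=0}^{i-1} g(m)/∏_{k=m}^{i-1} p_k`. -/
theorem reset_chain_poisson_solution
    (p g : ℕ → ℝ)
    (hp : ∀ i, 0 < p i ∧ p i < 1)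
    (ha : Summable (aSeq p))
    (hg : Summable fun i => piVec p i * |g i|) :
    ∀ f : ℕ → ℝ,
      ((∀ i, (∑' k, birthResetP p i k * f k) - f i
          = -(g i - ∑' m, piVec p m * g m)) ∧ f 0 = 0)
      ↔ (f 0 = 0 ∧ ∀ i, 1 ≤ i →
          f i = (∑' m, piVec p m * g m)
              * (∑ m ∈ Finset.range i, (∏ k ∈ Finset.Ico m i, p k)⁻¹)
            - ∑ m ∈ Finset.range i, g m / ∏ k ∈ Finset.Ico m i, p k) :=
  reset_chain_poisson_solution_general p g hp
end

section
/- In the illustrative example with p_i = 1/2 for i = 0 or i odd, and p_i = 1 − 3^{−i/2} for even i ≥ 2, let _{(n)}P̃ be the last-column augmentation. With g(i) = i, the sequence _{(n)}π^T _{(n)}g converges to π^T g along odd n but diverges to +∞ along even n; hence _{(n)}f_0 does not converge to f_0. Thus an arbitrarily chosen augmented truncation need not converge to the solution of Poisson's equation. -/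
open Filter Topology

/-- `p_i = 1/2` if `i = 0` or `i` is odd, and `p_i = 1 - 3^{-i/2}` if `i ≥ 2` is even. -/
noncomputable def pEx : ℕ → ℝ := fun i =>
  if i = 0 ∨ Odd i then 1 / 2 else 1 - 1 / 3 ^ (i / 2)

/-- `a_0 = 1`, `a_i = ∏_{k=0}^{i} p_k`. -/
noncomputable def aEx : ℕ → ℝ := fun i =>
  if i = 0 then 1 else ∏ k ∈ Finset.range (i + 1), pEx k

/-- `π^T g` for the original chain (`π(i) = a_i / ∑ a_k`), with `g(i) = i`. -/
noncomputable def sEx : ℝ := (∑' i, aEx i * i) / ∑' i, aEx i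

/-- Stationary mean `_{(n)}π^T _{(n)}g` of the last-column augmented truncation, with
`g(i) = i` : `_{(n)}π(i) = a_i _{(n)}π(0)` for `i < n`, `_{(n)}π(n) = (a_n/q_n) _{(n)}π(0)`. -/
noncomputable def sTrunc (n : ℕ) : ℝ :=
  (∑ i ∈ Finset.range n, aEx i * i + (aEx n / (1 - pEx n)) * n)
    / (∑ i ∈ Finset.range n, aEx i + aEx n / (1 - pEx n))

/-- Solution of Poisson's equation for the chain, `g(i) = i`, normalized at `0`. -/
noncomputable def fEx (i : ℕ) : ℝ :=
  sEx * (∑ m ∈ Finset.range i, (∏ k ∈ Finset.Ico m i, pEx k)⁻¹)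
    - ∑ m ∈ Finset.range i, (m : ℝ) / ∏ k ∈ Finset.Ico m i, pEx k

/-- Solution of Poisson's equation for the last-column augmented truncation. -/
noncomputable def fTrunc (n i : ℕ) : ℝ :=
  sTrunc n * (∑ m ∈ Finset.range i, (∏ k ∈ Finset.Ico m i, pEx k)⁻¹)
    - ∑ m ∈ Finset.range i, (m : ℝ) / ∏ k ∈ Finset.Ico m i, pEx k

/-! `sTrunc n` is the mean of `i` under the weights `a_0, …, a_{n-1}` together with the weight
`a_n / q_n` at state `n`. Every odd `p_i` is `1/2`, so `a_i ≤ 2^{-⌊i/2⌋}` and both `∑ a_i` and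
`∑ a_i i` converge. For odd `n`, `q_n = 1/2` and the extra terms `2 a_n`, `2 a_n n` vanish in the
limit, so the mean tends to `π^T g`. For `n = 2k`, `q_n = 3^{-k}`, and `3^k a_{2k}` grows at least
like `(4/3)^k`; once it exceeds `∑ a_i`, half of the mass sits at state `2k` and the mean is at
least `k`. Since `f_1 = 2 π^T g` for both chains, `_{(n)}f_1` cannot converge to `f_1` either. -/

open Finset

lemma prod_range_le_pow_div_two {p : ℕ → ℝ} {c : ℝ} (hp₀ : ∀ k, 0 ≤ p k) (hp₁ : ∀ k, p k ≤ 1)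
    (hc : ∀ k, Odd k → p k ≤ c) (n : ℕ) : ∏ k ∈ range n, p k ≤ c ^ (n / 2) := by
  have hc₀ : 0 ≤ c := (hp₀ 1).trans (hc 1 odd_one)
  induction n using Nat.twoStepInduction with
  | zero => simp
  | one => simpa using hp₁ 0
  | more n ih _ =>
    have hpair : p n * p (n + 1) ≤ c := by
      rcases Nat.even_or_odd n with h | h
      · simpa using mul_le_mul (hp₁ n) (hc _ h.add_one) (hp₀ _) zero_le_one
      · simpa using mul_le_mul (hc n h) (hp₁ _) (hp₀ _) hc₀
    rw [prod_range_succ, prod_range_succ, mul_assoc, show (n + 2) / 2 = n / 2 + 1 by omega,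
      pow_succ]
    exact mul_le_mul ih hpair (mul_nonneg (hp₀ _) (hp₀ _)) (pow_nonneg hc₀ _)

lemma summable_natCast_add_one_mul_pow_div_two {r : ℝ} (hr₀ : 0 ≤ r) (hr₁ : r < 1) :
    Summable fun i : ℕ => ((i : ℝ) + 1) * r ^ (i / 2) := by
  have hgeom : Summable fun k : ℕ => r ^ k := summable_geometric_of_lt_one hr₀ hr₁
  have hmul : Summable fun k : ℕ => (k : ℝ) * r ^ k := by
    simpa using summable_pow_mul_geometric_of_norm_lt_one 1 (by rwa [Real.norm_of_nonneg hr₀])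
  apply Summable.even_add_odd
  · refine ((hmul.mul_left 2).add hgeom).congr fun k => ?_
    rw [show 2 * k / 2 = k by omega]
    push_cast
    ring
  · refine ((hmul.mul_left 2).add (hgeom.mul_left 2)).congr fun k => ?_
    rw [show (2 * k + 1) / 2 = k by omega]
    push_cast
    ring

lemma pEx_zero : pEx 0 = 1 / 2 := by simp [pEx]

lemma pEx_of_odd {i : ℕ} (h : Odd i) : pEx i = 1 / 2 := by simp [pEx, h]

lemma pEx_two_mul {k : ℕ} (hk : k ≠ 0) : pEx (2 * k) = 1 - 1 / 3 ^ k := by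
  simp [pEx, hk]

lemma pEx_nonneg (i : ℕ) : 0 ≤ pEx i := by
  have : (1 : ℝ) / 3 ^ (i / 2) ≤ 1 := div_le_one_of_le₀ (one_le_pow₀ (by norm_num)) (by positivity)
  unfold pEx
  split_ifs <;> linarith

lemma pEx_le_one (i : ℕ) : pEx i ≤ 1 := by
  unfold pEx
  split_ifs <;> norm_num

lemma aEx_zero : aEx 0 = 1 := by simp [aEx]

lemma aEx_of_ne_zero {i : ℕ} (hi : i ≠ 0) : aEx i = ∏ k ∈ range (i + 1), pEx k := by
  simp [aEx, hi]

lemma aEx_succ {i : ℕ} (hi : i ≠ 0) : aEx (i + 1) = aEx i * pEx (i + 1) := by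
  rw [aEx_of_ne_zero hi, aEx_of_ne_zero i.succ_ne_zero, prod_range_succ]

lemma aEx_nonneg (i : ℕ) : 0 ≤ aEx i := by
  rcases eq_or_ne i 0 with rfl | hi
  · simp [aEx_zero]
  · rw [aEx_of_ne_zero hi]
    exact prod_nonneg fun k _ => pEx_nonneg k

lemma aEx_le_half_pow (i : ℕ) : aEx i ≤ (1 / 2 : ℝ) ^ (i / 2) := by
  rcases eq_or_ne i 0 with rfl | hi
  · simp [aEx_zero]
  · rw [aEx_of_ne_zero hi]
    calc ∏ k ∈ range (i + 1), pEx k ≤ (1 / 2 : ℝ) ^ ((i + 1) / 2) :=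
          prod_range_le_pow_div_two pEx_nonneg pEx_le_one (fun k hk => (pEx_of_odd hk).le) _
      _ ≤ (1 / 2 : ℝ) ^ (i / 2) := pow_le_pow_of_le_one (by norm_num) (by norm_num) (by omega)

lemma summable_aEx_add_one_mul : Summable fun i : ℕ => aEx i * ((i : ℝ) + 1) :=
  (summable_natCast_add_one_mul_pow_div_two (by norm_num) (by norm_num : (1 / 2 : ℝ) < 1)
    ).of_nonneg_of_le (fun i => mul_nonneg (aEx_nonneg i) (by positivity)) fun i => by
      rw [mul_comm]
      exact mul_le_mul_of_nonneg_left (aEx_le_half_pow i) (by positivity)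

lemma summable_aEx_mul_natCast : Summable fun i : ℕ => aEx i * i :=
  summable_aEx_add_one_mul.of_nonneg_of_le (fun i => mul_nonneg (aEx_nonneg i) i.cast_nonneg)
    (fun i => mul_le_mul_of_nonneg_left (by linarith) (aEx_nonneg i))

lemma summable_aEx : Summable aEx :=
  summable_aEx_add_one_mul.of_nonneg_of_le aEx_nonneg
    (fun i => le_mul_of_one_le_right (aEx_nonneg i) (by linarith [i.cast_nonneg (α := ℝ)]))

lemma tsum_aEx_pos : 0 < ∑' i, aEx i :=
  summable_aEx.tsum_pos aEx_nonneg 0 (by simp [aEx_zero])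

lemma aEx_div_one_sub_pEx_of_odd {n : ℕ} (hn : Odd n) : aEx n / (1 - pEx n) = 2 * aEx n := by
  rw [pEx_of_odd hn]
  ring

lemma aEx_div_one_sub_pEx_two_mul {k : ℕ} (hk : k ≠ 0) :
    aEx (2 * k) / (1 - pEx (2 * k)) = 3 ^ k * aEx (2 * k) := by
  rw [pEx_two_mul hk]
  field_simp
  ring

lemma three_pow_mul_aEx_two_mul_succ {k : ℕ} (hk : k ≠ 0) :
    3 ^ (k + 1) * aEx (2 * (k + 1)) = 3 / 2 * (1 - 1 / 3 ^ (k + 1)) * (3 ^ k * aEx (2 * k)) := by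
  rw [show 2 * (k + 1) = 2 * k + 1 + 1 by ring, aEx_succ (by omega), aEx_succ (by omega),
    pEx_of_odd (odd_two_mul_add_one k), show 2 * k + 1 + 1 = 2 * (k + 1) by ring,
    pEx_two_mul k.succ_ne_zero, pow_succ]
  ring

lemma tendsto_three_pow_mul_aEx_two_mul :
    Tendsto (fun k : ℕ => 3 ^ k * aEx (2 * k)) atTop atTop := by
  rw [← tendsto_add_atTop_iff_nat 1]
  refine tendsto_atTop_of_geom_le (c := 4 / 3) ?_ (by norm_num) fun k => ?_
  · norm_num [aEx_of_ne_zero, prod_range_succ, pEx_zero, pEx_of_odd,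
      pEx_two_mul (k := 1) one_ne_zero]
  · show 4 / 3 * (3 ^ (k + 1) * aEx (2 * (k + 1))) ≤ 3 ^ (k + 1 + 1) * aEx (2 * (k + 1 + 1))
    rw [three_pow_mul_aEx_two_mul_succ (by omega : k + 1 ≠ 0)]
    -- the growth factor is at least `3/2 · (1 - 1/9) = 4/3`
    have h9 : (1 : ℝ) / 3 ^ (k + 1 + 1) ≤ 1 / 9 :=
      one_div_le_one_div_of_le (by norm_num)
        (le_of_eq_of_le (by norm_num) (pow_le_pow_right₀ (by norm_num : (1 : ℝ) ≤ 3)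
          (by omega : 2 ≤ k + 1 + 1)))
    have hpos : 0 ≤ 3 ^ (k + 1) * aEx (2 * (k + 1)) := mul_nonneg (by positivity) (aEx_nonneg _)
    nlinarith [mul_le_mul_of_nonneg_right h9 hpos]

lemma div_two_le_add_mul_div_add {N D w x : ℝ} (hN : 0 ≤ N) (hD : 0 ≤ D) (hDw : D ≤ w)
    (hw : 0 < w) (hx : 0 ≤ x) : x / 2 ≤ (N + w * x) / (D + w) := by
  rw [le_div_iff₀ (by linarith)]
  nlinarith

lemma tendsto_sTrunc_two_mul : Tendsto (fun k => sTrunc (2 * k)) atTop atTop := by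
  refine tendsto_atTop_mono' atTop ?_ tendsto_natCast_atTop_atTop
  filter_upwards [tendsto_three_pow_mul_aEx_two_mul.eventually_ge_atTop (∑' i, aEx i),
    eventually_ne_atTop 0] with k hmass hk
  have hpartial : ∑ i ∈ range (2 * k), aEx i ≤ ∑' i, aEx i :=
    summable_aEx.sum_le_tsum _ (fun i _ => aEx_nonneg i)
  have h := div_two_le_add_mul_div_add (N := ∑ i ∈ range (2 * k), aEx i * i)
    (sum_nonneg fun i _ => mul_nonneg (aEx_nonneg i) i.cast_nonneg)
    (sum_nonneg fun i _ => aEx_nonneg i) (hpartial.trans hmass)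
    (tsum_aEx_pos.trans_le hmass) (Nat.cast_nonneg (2 * k))
  rw [sTrunc, aEx_div_one_sub_pEx_two_mul hk]
  exact le_of_eq_of_le (by push_cast; ring) h

lemma tendsto_sTrunc_two_mul_add_one :
    Tendsto (fun k => sTrunc (2 * k + 1)) atTop (𝓝 sEx) := by
  have hodd : Tendsto (fun k : ℕ => 2 * k + 1) atTop atTop :=
    tendsto_atTop_atTop.mpr fun b => ⟨b, fun a ha => by omega⟩
  have hnum := (summable_aEx_mul_natCast.hasSum.tendsto_sum_nat.comp hodd).add
    ((summable_aEx_mul_natCast.tendsto_atTop_zero.comp hodd).const_mul 2)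
  have hden := (summable_aEx.hasSum.tendsto_sum_nat.comp hodd).add
    ((summable_aEx.tendsto_atTop_zero.comp hodd).const_mul 2)
  rw [mul_zero, add_zero] at hnum hden
  refine (hnum.div hden tsum_aEx_pos.ne').congr fun k => ?_
  simp only [Pi.div_apply, Function.comp_apply, sTrunc,
    aEx_div_one_sub_pEx_of_odd (odd_two_mul_add_one k)]
  ring

lemma not_tendsto_sTrunc : ¬ Tendsto sTrunc atTop (𝓝 sEx) := fun h =>
  not_tendsto_nhds_of_tendsto_atTop tendsto_sTrunc_two_mul sEx
    (h.comp (tendsto_id.const_mul_atTop' two_pos))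

lemma fTrunc_one (n : ℕ) : fTrunc n 1 = 2 * sTrunc n := by
  simp [fTrunc, pEx_zero, mul_comm]

lemma fEx_one : fEx 1 = 2 * sEx := by
  simp [fEx, pEx_zero, mul_comm]

/-- In the illustrative example with `g(i) = i` the stationary means of
the last-column augmentations converge to `π^T g` along odd `n` but diverge to `+∞` along
even `n`; hence `_{(n)}π^T _{(n)}g ↛ π^T g` and `_{(n)}f_0 ↛ f_0` : an arbitrarily chosen
augmented truncation need not converge to the solution of Poisson's equation. -/
theorem last_column_augmentation_need_not_converge :
    Summable (fun i => aEx i * i) ∧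
    Tendsto (fun k => sTrunc (2 * k + 1)) atTop (𝓝 sEx) ∧
    Tendsto (fun k => sTrunc (2 * k)) atTop atTop ∧
    ¬ Tendsto sTrunc atTop (𝓝 sEx) ∧
    ∃ i, ¬ Tendsto (fun n => fTrunc n i) atTop (𝓝 (fEx i)) := by
  refine ⟨summable_aEx_mul_natCast, tendsto_sTrunc_two_mul_add_one, tendsto_sTrunc_two_mul,
    not_tendsto_sTrunc, 1, fun h => not_tendsto_sTrunc ?_⟩
  simpa [fTrunc_one, fEx_one] using h.const_mul (1 / 2 : ℝ)
end

section
/- Let Φ be an irreducible positive recurrent DTMC and g a finite nonnegative function. If E_ℓ[ζ_ℓ(g)] < ∞ for some state ℓ, then E_i[ζ_j(g)] < ∞ for all states i, j. In particular, if π^T g < ∞ then E_i[ζ_j(g)] < ∞ for all i, j. -/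
open MeasureTheory Filter Topology

open scoped ENNReal

/-!
Write `E_i ζ_j(g)` as the sum, over the finite paths `i → t₁ → ⋯ → tₙ` that avoid `j`, of the
path's probability times `g(tₙ)`. Cutting such a path at its first visit to `ℓ` gives
`E_i ζ_j ≤ E_i ζ_ℓ + E_ℓ ζ_j`. By irreducibility some path `ℓ → ⋯ → i` avoids `ℓ`, and its
probability times `E_i ζ_ℓ` is at most `E_ℓ ζ_ℓ`. A path from `ℓ` that avoids `j` is a sequence of
excursions from `ℓ` followed by a final piece that avoids `ℓ`. Each excursion avoids `j` with
probability at most `1 - δ`, where `δ > 0` is the probability of a path `ℓ → ⋯ → j` avoiding `ℓ`.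
Hence `E_ℓ ζ_j ≤ E_ℓ ζ_ℓ / δ`.

For the second claim, invariance and induction on the length give
`π_ℓ · ν_ℓ(m) ≤ π_m`, where `ν_ℓ(m)` is the expected number of visits to `m` during an excursion
from `ℓ`. So `E_ℓ ζ_ℓ(g) ≤ g(ℓ) + (π^T g) / π_ℓ` for any `ℓ` with `π_ℓ > 0`.
-/

namespace List

variable {α : Type*}

lemma getLastD_append (s t : List α) (a : α) : (s ++ t).getLastD a = t.getLastD (s.getLastD a) := by
  induction s generalizing a with
  | nil => rfl
  | cons b s ih => rw [cons_append, getLastD_cons, getLastD_cons, ih]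

lemma exists_eq_append_cons_of_mem_of_notMem {ℓ : α} {t : List α} (h : ℓ ∈ t) :
    ∃ s u, t = s ++ ℓ :: u ∧ ℓ ∉ s := by
  induction t with
  | nil => simp at h
  | cons a t ih =>
    by_cases ha : a = ℓ
    · exact ⟨[], t, by simp [ha], not_mem_nil⟩
    · obtain ⟨s, u, rfl, hs⟩ := ih (by simpa [Ne.symm ha] using h)
      exact ⟨a :: s, u, rfl, by simp [hs, Ne.symm ha]⟩

lemma append_cons_inj_of_notMem_left {ℓ : α} {s s' u u' : List α} (hs : ℓ ∉ s) (hs' : ℓ ∉ s')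
    (h : s ++ ℓ :: u = s' ++ ℓ :: u') : s = s' ∧ u = u' := by
  induction s generalizing s' with
  | nil =>
    cases s' with
    | nil => simpa using h
    | cons b s' =>
      simp only [nil_append, cons_append, cons.injEq] at h
      exact absurd (h.1 ▸ mem_cons_self) hs'
  | cons a s ih =>
    cases s' with
    | nil =>
      simp only [nil_append, cons_append, cons.injEq] at h
      exact absurd (h.1 ▸ mem_cons_self) hs
    | cons b s' =>
      simp only [cons_append, cons.injEq] at h
      obtain ⟨rfl, h⟩ := h
      obtain ⟨rfl, rfl⟩ := ih (fun h' => hs (mem_cons_of_mem a h'))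
        (fun h' => hs' (mem_cons_of_mem a h')) h
      exact ⟨rfl, rfl⟩

lemma eq_of_concat_prefix_concat {s t : List α} {a b : α} (h : s ++ [a] <+: t ++ [b])
    (ha : a ∉ t) : s ++ [a] = t ++ [b] := by
  have hlen : s.length ≤ t.length := by simpa using h.length_le
  refine h.eq_of_length ?_
  rcases hlen.lt_or_eq with hst | hst
  · have hget := h.getElem (i := s.length) (by simp)
    rw [getElem_concat_length rfl, getElem_append_left hst] at hget
    exact absurd (hget ▸ getElem_mem hst) ha
  · simp [hst]

end List

namespace ENNReal

lemma tsum_eq_iSup_tsum_ite_lt {α : Type*} (f : α → ℝ≥0∞) (k : α → ℕ) :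
    ∑' a, f a = ⨆ n, ∑' a, if k a < n then f a else 0 := by
  refine le_antisymm ?_ (iSup_le fun n => ENNReal.tsum_le_tsum fun a => ?_)
  · rw [ENNReal.tsum_eq_iSup_sum]
    refine iSup_le fun s => le_iSup_of_le (s.sup k + 1) ?_
    calc ∑ a ∈ s, f a = ∑ a ∈ s, if k a < s.sup k + 1 then f a else 0 :=
          Finset.sum_congr rfl fun a ha => (if_pos (Nat.lt_succ_of_le (Finset.le_sup ha))).symm
      _ ≤ _ := ENNReal.sum_le_tsum s
  · split_ifs <;> simp

lemma tsum_list_split_first {α : Type*} [DecidableEq α] (ℓ : α) (f : List α → ℝ≥0∞) :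
    ∑' t, f t = (∑' t, if ℓ ∉ t then f t else 0) +
      ∑' p : List α × List α, if ℓ ∉ p.1 then f (p.1 ++ ℓ :: p.2) else 0 := by
  let S : Set (List α × List α) := {p | ℓ ∉ p.1}
  have hinj : Function.Injective fun p : S => p.1.1 ++ ℓ :: p.1.2 := by
    rintro ⟨⟨s, u⟩, hs⟩ ⟨⟨s', u'⟩, hs'⟩ h
    obtain ⟨rfl, rfl⟩ := List.append_cons_inj_of_notMem_left hs hs' h
    rfl
  have hsupp : (Function.support fun t => if ℓ ∈ t then f t else 0) ⊆
      Set.range fun p : S => p.1.1 ++ ℓ :: p.1.2 := fun t ht => by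
    obtain ⟨s, u, rfl, hs⟩ := List.exists_eq_append_cons_of_mem_of_notMem
      (by by_contra h; simp [h] at ht : ℓ ∈ t)
    exact ⟨⟨(s, u), hs⟩, rfl⟩
  calc ∑' t, f t = ∑' t, ((if ℓ ∉ t then f t else 0) + if ℓ ∈ t then f t else 0) :=
        tsum_congr fun t => by split_ifs <;> simp_all
    _ = _ := by
      rw [ENNReal.tsum_add, ← hinj.tsum_eq hsupp]
      simp only [List.mem_append, List.mem_cons, true_or, or_true, if_true]
      rw [tsum_subtype S fun p => f (p.1 ++ ℓ :: p.2)]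
      simp [S, Set.indicator_apply]

lemma tsum_list_eq_nil_add_concat {α : Type*} (f : List α → ℝ≥0∞) :
    ∑' t, f t = f [] + ∑' p : List α × α, f (p.1 ++ [p.2]) := by
  have hinj : Function.Injective fun p : List α × α => p.1 ++ [p.2] := by
    rintro ⟨s, a⟩ ⟨s', a'⟩ h
    obtain ⟨rfl, h⟩ := List.append_inj' h rfl
    simp_all
  rw [ENNReal.tsum_eq_add_tsum_ite []]
  congr 1
  rw [← hinj.tsum_eq fun t ht => ?_]
  · simp
  rcases List.eq_nil_or_concat t with rfl | ⟨s, a, rfl⟩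
  · simp at ht
  · exact ⟨(s, a), by simp⟩

lemma le_div_of_le_add_mul {x : ℕ → ℝ≥0∞} {c q δ : ℝ≥0∞} (h0 : x 0 = 0)
    (hsucc : ∀ n, x (n + 1) ≤ c + q * x n) (hqδ : q + δ ≤ 1) (hδ : δ ≠ 0) (n : ℕ) :
    x n ≤ c / δ := by
  induction n with
  | zero => simp [h0]
  | succ n ih =>
    have hδtop : δ ≠ ⊤ := ne_top_of_le_ne_top ENNReal.one_ne_top (le_add_self.trans hqδ)
    calc x (n + 1) ≤ δ * (c / δ) + q * (c / δ) := by
          rw [ENNReal.mul_div_cancel hδ hδtop]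
          exact (hsucc n).trans (by gcongr)
      _ = (q + δ) * (c / δ) := by ring
      _ ≤ c / δ := mul_le_of_le_one_left zero_le hqδ

end ENNReal

namespace MarkovChain

open MeasureTheory

noncomputable def pathWeight (P : ℕ → ℕ → ℝ) : ℕ → List ℕ → ℝ≥0∞
  | _, [] => 1
  | a, b :: t => ENNReal.ofReal (P a b) * pathWeight P b t

section PathWeight

variable {P : ℕ → ℕ → ℝ}

@[simp] lemma pathWeight_nil (a : ℕ) : pathWeight P a [] = 1 := rfl

@[simp] lemma pathWeight_cons (a b : ℕ) (t : List ℕ) :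
    pathWeight P a (b :: t) = ENNReal.ofReal (P a b) * pathWeight P b t := rfl

lemma pathWeight_append (a : ℕ) (s t : List ℕ) :
    pathWeight P a (s ++ t) = pathWeight P a s * pathWeight P (s.getLastD a) t := by
  induction s generalizing a with
  | nil => simp
  | cons b s ih =>
    rw [List.cons_append, pathWeight_cons, pathWeight_cons, ih, List.getLastD_cons, mul_assoc]

lemma pathWeight_concat (a m : ℕ) (s : List ℕ) :
    pathWeight P a (s ++ [m]) = pathWeight P a s * ENNReal.ofReal (P (s.getLastD a) m) := by
  simp [pathWeight_append]

lemma pathWeight_eq_ofReal_prod (hP : ∀ a b, 0 ≤ P a b) (a : ℕ) (t : List ℕ) :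
    pathWeight P a t = ENNReal.ofReal (∏ k ∈ Finset.range t.length,
      P ((a :: t).getD k 0) ((a :: t).getD (k + 1) 0)) := by
  induction t generalizing a with
  | nil => simp
  | cons b t ih =>
    rw [pathWeight_cons, ih, List.length_cons, Finset.prod_range_succ', mul_comm,
      ENNReal.ofReal_mul' (hP _ _)]
    rfl

end PathWeight

def pathPrefix (ω : ℕ → ℕ) (n : ℕ) : List ℕ := (List.range n).map fun r => ω (r + 1)

lemma pathPrefix_prefix {ω : ℕ → ℕ} {m n : ℕ} (h : m ≤ n) : pathPrefix ω m <+: pathPrefix ω n := by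
  have : pathPrefix ω m = (pathPrefix ω n).take m := by
    simp [pathPrefix, ← List.map_take, List.take_range, min_eq_left h]
  exact this ▸ List.take_prefix _ _

lemma pathPrefix_injective (ω : ℕ → ℕ) : Function.Injective (pathPrefix ω) :=
  fun m n h => by simpa [pathPrefix] using congrArg List.length h

lemma getLastD_pathPrefix (ω : ℕ → ℕ) (k : ℕ) : (pathPrefix ω k).getLastD (ω 0) = ω k := by
  cases k with
  | zero => rfl
  | succ k => simp [pathPrefix, List.range_succ]

lemma mem_pathPrefix {ω : ℕ → ℕ} {k j : ℕ} : j ∈ pathPrefix ω k ↔ ∃ m, 1 ≤ m ∧ m ≤ k ∧ ω m = j := by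
  simp only [pathPrefix, List.mem_map, List.mem_range]
  constructor
  · rintro ⟨r, hr, rfl⟩
    exact ⟨r + 1, by omega, hr, rfl⟩
  · rintro ⟨m, hm1, hmk, rfl⟩
    exact ⟨m - 1, by omega, by rw [Nat.sub_add_cancel hm1]⟩

def cylinder (i : ℕ) (t : List ℕ) : Set (ℕ → ℕ) :=
  {ω | ∀ k ≤ t.length, ω k = (i :: t).getD k 0}

lemma mem_cylinder_iff {ω : ℕ → ℕ} {i : ℕ} {t : List ℕ} :
    ω ∈ cylinder i t ↔ ω 0 = i ∧ pathPrefix ω t.length = t := by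
  constructor
  · intro h
    refine ⟨h 0 (Nat.zero_le _), List.ext_getElem (by simp [pathPrefix]) fun r _ hr => ?_⟩
    simpa [pathPrefix, hr] using h (r + 1) hr
  · rintro ⟨h0, ht⟩ (_ | r) hr
    · exact h0
    · have hr' : r < t.length := hr
      conv_rhs => rw [← ht]
      simp [pathPrefix, hr']

lemma measurableSet_cylinder (i : ℕ) (t : List ℕ) : MeasurableSet (cylinder i t) := by
  simp only [cylinder, Set.ofPred_forall]
  exact .iInter fun k => .iInter fun _ =>
    measurableSet_eq_fun (measurable_pi_apply k) measurable_const

section ChainLaw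

variable {P : ℕ → ℕ → ℝ} {μ : ℕ → Measure (ℕ → ℕ)}

lemma measure_cylinder (hP : ∀ a b, 0 ≤ P a b) (hchain : MCChainLaw P μ) (i : ℕ)
    (t : List ℕ) : μ i (cylinder i t) = pathWeight P i t := by
  rw [pathWeight_eq_ofReal_prod hP, ← hchain.2 i t.length _ rfl]
  rfl

lemma disjoint_cylinder {i : ℕ} {s t : List ℕ} (hst : ¬ s <+: t) (hts : ¬ t <+: s) :
    Disjoint (cylinder i s) (cylinder i t) := by
  refine Set.disjoint_left.2 fun ω hs ht => ?_
  obtain ⟨-, hs⟩ := mem_cylinder_iff.1 hs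
  obtain ⟨-, ht⟩ := mem_cylinder_iff.1 ht
  have hs' := hs ▸ pathPrefix_prefix (ω := ω) (le_max_left s.length t.length)
  have ht' := ht ▸ pathPrefix_prefix (ω := ω) (le_max_right s.length t.length)
  exact (List.prefix_or_prefix_of_prefix hs' ht').elim hst hts

lemma tsum_indicator_pathWeight_le_one (hP : ∀ a b, 0 ≤ P a b) (hchain : MCChainLaw P μ)
    {ι : Type*} [Countable ι] (i : ℕ) (S : Set ι) (t : ι → List ℕ)
    (hS : S.Pairwise fun a b => ¬ t a <+: t b) :
    ∑' a, S.indicator (fun a => pathWeight P i (t a)) a ≤ 1 := by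
  have := hchain.1 i
  calc ∑' a, S.indicator (fun a => pathWeight P i (t a)) a
      = ∑' a : S, μ i (cylinder i (t a)) := by
        simp_rw [measure_cylinder hP hchain]
        exact (tsum_subtype S _).symm
    _ = μ i (⋃ a ∈ S, cylinder i (t a)) :=
        (measure_biUnion S.to_countable
          (fun a ha b hb hab => disjoint_cylinder (hS ha hb hab) (hS hb ha hab.symm))
          fun a _ => measurableSet_cylinder i (t a)).symm
    _ ≤ 1 := prob_le_one

end ChainLaw

-- `P_i(τ_ℓ < τ_j)`, for the return times `τ_x = inf {k ≥ 1 | Φ_k = x}`.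
noncomputable def hitBeforeWeight (P : ℕ → ℕ → ℝ) (i ℓ j : ℕ) : ℝ≥0∞ :=
  ∑' s : List ℕ, if j ∉ s ∧ ℓ ∉ s then pathWeight P i (s ++ [ℓ]) else 0

lemma hitBeforeWeight_add_hitBeforeWeight_le_one {P : ℕ → ℕ → ℝ} {μ : ℕ → Measure (ℕ → ℕ)}
    (hP : ∀ a b, 0 ≤ P a b) (hchain : MCChainLaw P μ) {ℓ j : ℕ} (hjℓ : j ≠ ℓ) (i : ℕ) :
    hitBeforeWeight P i ℓ j + hitBeforeWeight P i j ℓ ≤ 1 := by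
  let target : Bool → ℕ := fun b => if b then ℓ else j
  let S : Set (Bool × List ℕ) := {p | j ∉ p.2 ∧ ℓ ∉ p.2}
  have hS : S.Pairwise fun p q => ¬ p.2 ++ [target p.1] <+: q.2 ++ [target q.1] := by
    rintro ⟨b, s⟩ - ⟨b', s'⟩ ⟨hj', hℓ'⟩ hne hpre
    have heq := List.eq_of_concat_prefix_concat hpre (by cases b <;> simpa [target])
    obtain ⟨rfl, hb⟩ := List.append_inj' heq rfl
    cases b <;> cases b' <;> simp_all [target, Ne.symm hjℓ]
  have := tsum_indicator_pathWeight_le_one hP hchain i S (fun p => p.2 ++ [target p.1]) hS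
  rw [ENNReal.tsum_prod', tsum_bool, add_comm] at this
  convert this using 3 <;> simp [hitBeforeWeight, S, target, Set.indicator_apply, and_comm]

lemma mem_pathPrefix_iff_hitTime_le {ω : ℕ → ℕ} {j k : ℕ} (hret : ∃ m, 1 ≤ m ∧ ω m = j) :
    j ∈ pathPrefix ω k ↔ hitTime j ω ≤ k := by
  rw [mem_pathPrefix]
  constructor
  · rintro ⟨m, hm1, hmk, hmj⟩
    exact (Nat.sInf_le (show m ∈ {k | 1 ≤ k ∧ ω k = j} from ⟨hm1, hmj⟩)).trans hmk
  · intro hk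
    obtain ⟨h1, hj⟩ := Nat.sInf_mem hret
    exact ⟨_, h1, hk, hj⟩

lemma ofReal_addF_eq_tsum_indicator {g : ℕ → ℝ} (hg : ∀ m, 0 ≤ g m) {i j : ℕ} {ω : ℕ → ℕ}
    (hω0 : ω 0 = i) (hret : ∃ m, 1 ≤ m ∧ ω m = j) :
    ENNReal.ofReal (addF g j ω) = ∑' t : List ℕ, (cylinder i t).indicator
      (fun _ => if j ∉ t then ENNReal.ofReal (g (t.getLastD i)) else 0) ω := by
  subst hω0
  have hsupp : (Function.support fun t : List ℕ => (cylinder (ω 0) t).indicator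
      (fun _ => if j ∉ t then ENNReal.ofReal (g (t.getLastD (ω 0))) else 0) ω) ⊆
      Set.range (pathPrefix ω) := fun t ht =>
    ⟨t.length, (mem_cylinder_iff.1 (Set.mem_of_indicator_ne_zero ht)).2⟩
  have hmem (k : ℕ) : ω ∈ cylinder (ω 0) (pathPrefix ω k) :=
    mem_cylinder_iff.2 ⟨rfl, by simp [pathPrefix]⟩
  rw [← (pathPrefix_injective ω).tsum_eq hsupp, addF,
    ENNReal.ofReal_sum_of_nonneg fun k _ => hg _]
  simp_rw [Set.indicator_of_mem (hmem _), getLastD_pathPrefix, mem_pathPrefix_iff_hitTime_le hret,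
    not_le]
  rw [tsum_eq_sum (s := Finset.range (hitTime j ω)) fun k hk => if_neg (by simpa using hk)]
  exact Finset.sum_congr rfl fun k hk => (if_pos (Finset.mem_range.1 hk)).symm

-- The taboo expansion `∑ₖ ∑ₘ _j p^k_{im} G(m)` of `E_i ζ_j(G)`.
noncomputable def tabooSum (P : ℕ → ℕ → ℝ) (G : ℕ → ℝ≥0∞) (i j : ℕ) : ℝ≥0∞ :=
  ∑' t : List ℕ, if j ∉ t then pathWeight P i t * G (t.getLastD i) else 0

lemma lintegral_ofReal_addF {P : ℕ → ℕ → ℝ} {μ : ℕ → Measure (ℕ → ℕ)} {g : ℕ → ℝ}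
    (hP : ∀ a b, 0 ≤ P a b) (hchain : MCChainLaw P μ) (hg : ∀ m, 0 ≤ g m) {i j : ℕ}
    (hret : μ i {ω | ∃ k, 1 ≤ k ∧ ω k = j} = 1) :
    ∫⁻ ω, ENNReal.ofReal (addF g j ω) ∂μ i = tabooSum P (fun m => ENNReal.ofReal (g m)) i j := by
  have := hchain.1 i
  have hstart : ∀ᵐ ω ∂μ i, ω ∈ cylinder i [] :=
    (mem_ae_iff_prob_eq_one (measurableSet_cylinder i [])).2 (by
      rw [measure_cylinder hP hchain, pathWeight_nil])
  have hreturn : ∀ᵐ ω ∂μ i, ∃ k, 1 ≤ k ∧ ω k = j :=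
    (mem_ae_iff_prob_eq_one (by measurability)).2 hret
  rw [lintegral_congr_ae (hstart.and hreturn |>.mono fun ω hω =>
      ofReal_addF_eq_tsum_indicator hg (mem_cylinder_iff.1 hω.1).1 hω.2),
    lintegral_tsum fun t => (measurable_const.indicator (measurableSet_cylinder i t)).aemeasurable]
  refine tsum_congr fun t => ?_
  rw [lintegral_indicator_const (measurableSet_cylinder i t), measure_cylinder hP hchain]
  split_ifs <;> simp [mul_comm]

section Taboo

variable {P : ℕ → ℕ → ℝ} {G : ℕ → ℝ≥0∞}

noncomputable def tabooSumTrunc (P : ℕ → ℕ → ℝ) (G : ℕ → ℝ≥0∞) (ℓ n i j : ℕ) : ℝ≥0∞ :=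
  ∑' t : List ℕ, if t.count ℓ < n ∧ j ∉ t then pathWeight P i t * G (t.getLastD i) else 0

lemma tabooSum_eq_iSup_tabooSumTrunc (ℓ i j : ℕ) :
    tabooSum P G i j = ⨆ n, tabooSumTrunc P G ℓ n i j := by
  simp_rw [tabooSum, tabooSumTrunc, ite_and]
  exact ENNReal.tsum_eq_iSup_tsum_ite_lt _ _

lemma tabooSumTrunc_le_tabooSum (ℓ n i j : ℕ) : tabooSumTrunc P G ℓ n i j ≤ tabooSum P G i j := by
  rw [tabooSum_eq_iSup_tabooSumTrunc ℓ]
  exact le_iSup (fun n => tabooSumTrunc P G ℓ n i j) n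

lemma tabooSumTrunc_zero (ℓ i j : ℕ) : tabooSumTrunc P G ℓ 0 i j = 0 := by
  simp [tabooSumTrunc]

lemma tabooSumTrunc_succ_le {ℓ j : ℕ} (hjℓ : j ≠ ℓ) (n i : ℕ) :
    tabooSumTrunc P G ℓ (n + 1) i j ≤
      tabooSum P G i ℓ + hitBeforeWeight P i ℓ j * tabooSumTrunc P G ℓ n ℓ j := by
  rw [tabooSumTrunc, ENNReal.tsum_list_split_first ℓ, ENNReal.tsum_prod', hitBeforeWeight,
    ← ENNReal.tsum_mul_right]
  refine add_le_add (ENNReal.tsum_le_tsum fun t => by split_ifs <;> simp_all)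
    (ENNReal.tsum_le_tsum fun s => ?_)
  rw [tabooSumTrunc, ← ENNReal.tsum_mul_left]
  refine ENNReal.tsum_le_tsum fun u => ?_
  dsimp only
  by_cases hs : ℓ ∈ s
  · simp [hs]
  have hcount : (s ++ ℓ :: u).count ℓ = u.count ℓ + 1 := by
    simp [List.count_append, List.count_eq_zero.2 hs, List.count_cons_self]
  have hmem : j ∈ s ++ ℓ :: u ↔ j ∈ s ∨ j ∈ u := by simp [hjℓ]
  have hweight : pathWeight P i (s ++ ℓ :: u) * G ((s ++ ℓ :: u).getLastD i) =
      pathWeight P i (s ++ [ℓ]) * (pathWeight P ℓ u * G (u.getLastD ℓ)) := by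
    rw [show s ++ ℓ :: u = s ++ [ℓ] ++ u by simp, pathWeight_append, List.getLastD_concat,
      List.getLastD_append, List.getLastD_concat, mul_assoc]
  simp only [hcount, hmem, hweight, hs]
  split_ifs <;> simp_all

lemma pathWeight_mul_tabooSum_le {a ℓ : ℕ} {s : List ℕ} (hs : ℓ ∉ s) :
    pathWeight P a s * tabooSum P G (s.getLastD a) ℓ ≤ tabooSum P G a ℓ := by
  rw [tabooSum, tabooSum, ← ENNReal.tsum_mul_left]
  refine le_of_eq_of_le (tsum_congr fun t => ?_)
    (ENNReal.tsum_comp_le_tsum_of_injective (List.append_right_injective s) _)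
  simp only [List.mem_append, hs, false_or, pathWeight_append, List.getLastD_append, mul_assoc]
  split_ifs <;> simp

end Taboo

section Irreducible

variable {P : ℕ → ℕ → ℝ}

lemma exists_pathWeight_ne_zero_of_matPow_pos (hP : ∀ a b, 0 ≤ P a b) :
    ∀ {n i k : ℕ}, 0 < matPow P n i k → ∃ t, t.getLastD i = k ∧ pathWeight P i t ≠ 0
  | 0, i, k, h => by
    have hik : i = k := by
      by_contra hik
      simp [matPow, hik] at h
    exact ⟨[], hik, by simp⟩
  | n + 1, i, k, h => by
    obtain ⟨m, hm⟩ : ∃ m, 0 < matPow P n i m * P m k := by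
      by_contra! hall
      exact (tsum_nonpos hall).not_gt h
    obtain ⟨hpow, hstep⟩ := (pos_and_pos_or_neg_and_neg_of_mul_pos hm).resolve_right
      fun h => (hP m k).not_gt h.2
    obtain ⟨t, rfl, ht⟩ := exists_pathWeight_ne_zero_of_matPow_pos hP hpow
    refine ⟨t ++ [k], List.getLastD_concat, ?_⟩
    rw [pathWeight_concat]
    exact mul_ne_zero ht (ENNReal.ofReal_pos.2 hstep).ne'

lemma exists_pathWeight_ne_zero_avoiding {i k : ℕ} (hik : i ≠ k) {t : List ℕ}
    (hlast : t.getLastD i = k) (ht : pathWeight P i t ≠ 0) :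
    ∃ w, i ∉ w ∧ k ∉ w ∧ pathWeight P i (w ++ [k]) ≠ 0 := by
  induction hn : t.length using Nat.strong_induction_on generalizing t with
  | _ n ih =>
  obtain ⟨w, rfl⟩ : ∃ w, t = w ++ [k] := by
    rcases List.eq_nil_or_concat t with rfl | ⟨w, b, rfl⟩
    · exact absurd hlast hik
    · rw [List.concat_eq_append, List.getLastD_concat] at hlast
      exact ⟨w, by rw [List.concat_eq_append, hlast]⟩
  by_cases hkw : k ∈ w
  · obtain ⟨w₁, w₂, rfl⟩ := List.append_of_mem hkw
    rw [show w₁ ++ k :: w₂ ++ [k] = w₁ ++ [k] ++ (w₂ ++ [k]) by simp, pathWeight_append] at ht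
    exact ih _ (by simp [← hn]) List.getLastD_concat (left_ne_zero_of_mul ht) rfl
  by_cases hiw : i ∈ w
  · obtain ⟨w₁, w₂, rfl⟩ := List.append_of_mem hiw
    rw [show w₁ ++ i :: w₂ ++ [k] = w₁ ++ [i] ++ (w₂ ++ [k]) by simp, pathWeight_append,
      List.getLastD_concat] at ht
    have hlen : (w₂ ++ [k]).length < n := by
      simp only [← hn, List.length_append, List.length_cons, List.length_nil]
      omega
    exact ih _ hlen List.getLastD_concat (right_ne_zero_of_mul ht) rfl
  exact ⟨w, hiw, hkw, ht⟩

lemma exists_pathWeight_ne_zero_of_irreducible (hP : ∀ a b, 0 ≤ P a b) (hirr : MCIrreducible P)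
    {i k : ℕ} (hik : i ≠ k) : ∃ w, i ∉ w ∧ k ∉ w ∧ pathWeight P i (w ++ [k]) ≠ 0 := by
  obtain ⟨n, hn⟩ := hirr i k
  obtain ⟨t, hlast, ht⟩ := exists_pathWeight_ne_zero_of_matPow_pos hP hn
  exact exists_pathWeight_ne_zero_avoiding hik hlast ht

end Irreducible

section Transfer

variable {P : ℕ → ℕ → ℝ} {G : ℕ → ℝ≥0∞} {μ : ℕ → Measure (ℕ → ℕ)} {ℓ : ℕ}

lemma tabooSum_from_lt_top (hP : ∀ a b, 0 ≤ P a b) (hchain : MCChainLaw P μ)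
    (hirr : MCIrreducible P) (hℓ : tabooSum P G ℓ ℓ < ⊤) (j : ℕ) : tabooSum P G ℓ j < ⊤ := by
  rcases eq_or_ne j ℓ with rfl | hjℓ
  · exact hℓ
  obtain ⟨w, hℓw, hjw, hw⟩ := exists_pathWeight_ne_zero_of_irreducible hP hirr hjℓ.symm
  have hδ : hitBeforeWeight P ℓ j ℓ ≠ 0 :=
    ne_bot_of_le_ne_bot hw (le_of_eq_of_le (if_pos ⟨hℓw, hjw⟩).symm (ENNReal.le_tsum w))
  have hbound (n : ℕ) := ENNReal.le_div_of_le_add_mul (x := fun n => tabooSumTrunc P G ℓ n ℓ j)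
    (tabooSumTrunc_zero ℓ ℓ j) (fun n => tabooSumTrunc_succ_le hjℓ n ℓ)
    (hitBeforeWeight_add_hitBeforeWeight_le_one hP hchain hjℓ ℓ) hδ n
  rw [tabooSum_eq_iSup_tabooSumTrunc ℓ]
  exact (iSup_le hbound).trans_lt (ENNReal.div_lt_top hℓ.ne hδ)

lemma tabooSum_to_lt_top (hP : ∀ a b, 0 ≤ P a b) (hirr : MCIrreducible P)
    (hℓ : tabooSum P G ℓ ℓ < ⊤) (i : ℕ) : tabooSum P G i ℓ < ⊤ := by
  rcases eq_or_ne i ℓ with rfl | hiℓ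
  · exact hℓ
  obtain ⟨w, hℓw, -, hw⟩ := exists_pathWeight_ne_zero_of_irreducible hP hirr hiℓ.symm
  have hdom : pathWeight P ℓ (w ++ [i]) * tabooSum P G i ℓ ≤ tabooSum P G ℓ ℓ := by
    simpa only [List.getLastD_concat] using
      pathWeight_mul_tabooSum_le (P := P) (G := G) (a := ℓ) (s := w ++ [i])
        (by simp [hℓw, hiℓ.symm])
  exact ENNReal.lt_top_of_mul_ne_top_right (hdom.trans_lt hℓ).ne hw

theorem tabooSum_lt_top_of_tabooSum_self_lt_top (hP : ∀ a b, 0 ≤ P a b)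
    (hchain : MCChainLaw P μ) (hirr : MCIrreducible P) (hℓ : tabooSum P G ℓ ℓ < ⊤) (i j : ℕ) :
    tabooSum P G i j < ⊤ := by
  rcases eq_or_ne j ℓ with rfl | hjℓ
  · exact tabooSum_to_lt_top hP hirr hℓ i
  rw [tabooSum_eq_iSup_tabooSumTrunc ℓ]
  refine (iSup_le fun n => ?_).trans_lt (ENNReal.add_lt_top.2
    ⟨tabooSum_to_lt_top hP hirr hℓ i, tabooSum_from_lt_top hP hchain hirr hℓ j⟩)
  cases n with
  | zero => simp [tabooSumTrunc_zero]
  | succ n =>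
    calc tabooSumTrunc P G ℓ (n + 1) i j
        ≤ tabooSum P G i ℓ + hitBeforeWeight P i ℓ j * tabooSumTrunc P G ℓ n ℓ j :=
          tabooSumTrunc_succ_le hjℓ n i
      _ ≤ tabooSum P G i ℓ + 1 * tabooSum P G ℓ j := by
          gcongr
          · exact le_self_add.trans (hitBeforeWeight_add_hitBeforeWeight_le_one hP hchain hjℓ i)
          · exact tabooSumTrunc_le_tabooSum ℓ n ℓ j
      _ = tabooSum P G i ℓ + tabooSum P G ℓ j := by rw [one_mul]

end Transfer

section Invariant

variable {P : ℕ → ℕ → ℝ}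

-- For `m ≠ ℓ`, `∑_{k=1}^n _ℓ p^k_{ℓm}`: the expected number of visits to `m` in the first `n`
-- steps of an excursion from `ℓ`.
noncomputable def excursionVisits (P : ℕ → ℕ → ℝ) (ℓ n m : ℕ) : ℝ≥0∞ :=
  ∑' s : List ℕ, if s.length < n ∧ ℓ ∉ s ++ [m] then pathWeight P ℓ (s ++ [m]) else 0

lemma excursionVisits_self (ℓ n : ℕ) : excursionVisits P ℓ n ℓ = 0 := by
  simp [excursionVisits]

lemma excursionVisits_succ {ℓ m : ℕ} (hm : m ≠ ℓ) (n : ℕ) :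
    excursionVisits P ℓ (n + 1) m =
      ENNReal.ofReal (P ℓ m) + ∑' r, excursionVisits P ℓ n r * ENNReal.ofReal (P r m) := by
  rw [excursionVisits, ENNReal.tsum_list_eq_nil_add_concat, ENNReal.tsum_prod', ENNReal.tsum_comm]
  congr 1
  · simp [Ne.symm hm]
  refine tsum_congr fun r => ?_
  rw [excursionVisits, ← ENNReal.tsum_mul_right]
  refine tsum_congr fun s => ?_
  rw [pathWeight_concat ℓ m (s ++ [r]), List.getLastD_concat]
  simp only [List.length_append, List.length_singleton, add_lt_add_iff_right, List.mem_append,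
    List.mem_singleton]
  split_ifs <;> simp_all

lemma ofReal_eq_tsum_of_invariant {π : ℕ → ℝ} (hP : ∀ a b, 0 ≤ P a b) (hinv : MCInvariant P π)
    (m : ℕ) : ENNReal.ofReal (π m) = ∑' r, ENNReal.ofReal (π r) * ENNReal.ofReal (P r m) := by
  rw [← (hinv.2.2 m).tsum_eq, ENNReal.ofReal_tsum_of_nonneg
    (fun r => mul_nonneg (hinv.1 r) (hP r m)) (hinv.2.2 m).summable]
  exact tsum_congr fun r => ENNReal.ofReal_mul (hinv.1 r)

lemma ofReal_mul_excursionVisits_le {π : ℕ → ℝ} (hP : ∀ a b, 0 ≤ P a b) (hinv : MCInvariant P π)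
    (ℓ : ℕ) : ∀ n m, ENNReal.ofReal (π ℓ) * excursionVisits P ℓ n m ≤ ENNReal.ofReal (π m)
  | 0, m => by simp [excursionVisits]
  | n + 1, m => by
    rcases eq_or_ne m ℓ with rfl | hm
    · simp [excursionVisits_self]
    rw [excursionVisits_succ hm, mul_add, ← ENNReal.tsum_mul_left,
      ofReal_eq_tsum_of_invariant hP hinv m,
      ENNReal.tsum_eq_add_tsum_ite ℓ (f := fun r => ENNReal.ofReal (π r) * ENNReal.ofReal (P r m))]
    refine add_le_add le_rfl (ENNReal.tsum_le_tsum fun r => ?_)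
    split_ifs with hr
    · simp [hr, excursionVisits_self]
    · rw [← mul_assoc]
      gcongr
      exact ofReal_mul_excursionVisits_le hP hinv ℓ n r

lemma tabooSum_self_eq (G : ℕ → ℝ≥0∞) (ℓ : ℕ) :
    tabooSum P G ℓ ℓ = G ℓ + ∑' m, (⨆ n, excursionVisits P ℓ n m) * G m := by
  rw [tabooSum, ENNReal.tsum_list_eq_nil_add_concat, ENNReal.tsum_prod', ENNReal.tsum_comm]
  congr 1
  · simp
  refine tsum_congr fun m => ?_
  simp_rw [excursionVisits, ite_and]
  rw [← ENNReal.tsum_eq_iSup_tsum_ite_lt, ← ENNReal.tsum_mul_right]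
  refine tsum_congr fun s => ?_
  split_ifs <;> simp

theorem exists_tabooSum_self_lt_top {P : ℕ → ℕ → ℝ} {π g : ℕ → ℝ} (hP : ∀ a b, 0 ≤ P a b)
    (hinv : MCInvariant P π) (hg : ∀ m, 0 ≤ g m) (hsum : Summable fun m => π m * g m) :
    ∃ ℓ, tabooSum P (fun m => ENNReal.ofReal (g m)) ℓ ℓ < ⊤ := by
  obtain ⟨ℓ, hℓ⟩ : ∃ ℓ, 0 < π ℓ := by
    by_contra! h
    have hzero : π = 0 := funext fun m => le_antisymm (h m) (hinv.1 m)
    exact one_ne_zero (hinv.2.1.unique (hzero ▸ hasSum_zero))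
  have hc : ENNReal.ofReal (π ℓ) ≠ 0 := (ENNReal.ofReal_pos.2 hℓ).ne'
  have hfin : ∑' m, ENNReal.ofReal (π m) * ENNReal.ofReal (g m) ≠ ⊤ := by
    simp_rw [← ENNReal.ofReal_mul (hinv.1 _)]
    rw [← ENNReal.ofReal_tsum_of_nonneg (fun m => mul_nonneg (hinv.1 m) (hg m)) hsum]
    exact ENNReal.ofReal_ne_top
  refine ⟨ℓ, ?_⟩
  calc tabooSum P (fun m => ENNReal.ofReal (g m)) ℓ ℓ
      ≤ ENNReal.ofReal (g ℓ) +
          ∑' m, ENNReal.ofReal (π m) / ENNReal.ofReal (π ℓ) * ENNReal.ofReal (g m) := by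
        rw [tabooSum_self_eq]
        gcongr with m
        refine iSup_le fun n =>
          (ENNReal.le_div_iff_mul_le (.inl hc) (.inl ENNReal.ofReal_ne_top)).2 ?_
        rw [mul_comm]
        exact ofReal_mul_excursionVisits_le hP hinv ℓ n m
    _ = ENNReal.ofReal (g ℓ) +
          (∑' m, ENNReal.ofReal (π m) * ENNReal.ofReal (g m)) / ENNReal.ofReal (π ℓ) := by
        simp_rw [div_eq_mul_inv, mul_right_comm _ (ENNReal.ofReal (π ℓ))⁻¹, ENNReal.tsum_mul_right]
    _ < ⊤ := ENNReal.add_lt_top.2 ⟨ENNReal.ofReal_lt_top, ENNReal.div_lt_top hfin hc⟩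

end Invariant

end MarkovChain

/-- For an irreducible positive recurrent DTMC and a finite nonnegative
function `g` : if `E_ℓ[ζ_ℓ(g)] < ∞` for some state `ℓ`, then `E_i[ζ_j(g)] < ∞` for all
states `i, j`; in particular, if `π^T g < ∞` then `E_i[ζ_j(g)] < ∞` for all `i, j`. -/
theorem additive_functional_finiteness_transfer
    (P : ℕ → ℕ → ℝ) (μ : ℕ → Measure (ℕ → ℕ)) (π g : ℕ → ℝ)
    (hP : MCStochastic P) (hirr : MCIrreducible P) (hchain : MCChainLaw P μ)
    (hrec : MCPositiveRecurrent μ) (hinv : MCInvariant P π)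
    (hgnn : ∀ i, 0 ≤ g i) :
    ((∃ ℓ, (∫⁻ ω, ENNReal.ofReal (addF g ℓ ω) ∂ μ ℓ) < ⊤) →
      ∀ i j, (∫⁻ ω, ENNReal.ofReal (addF g j ω) ∂ μ i) < ⊤) ∧
    (Summable (fun i => π i * g i) →
      ∀ i j, (∫⁻ ω, ENNReal.ofReal (addF g j ω) ∂ μ i) < ⊤) := by
  have hexpect (i j : ℕ) : ∫⁻ ω, ENNReal.ofReal (addF g j ω) ∂μ i =
      MarkovChain.tabooSum P (fun m => ENNReal.ofReal (g m)) i j :=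
    MarkovChain.lintegral_ofReal_addF hP.1 hchain hgnn (hrec i j).1
  simp only [hexpect]
  refine ⟨fun ⟨ℓ, hℓ⟩ => ?_, fun hsum => ?_⟩
  · exact MarkovChain.tabooSum_lt_top_of_tabooSum_self_lt_top hP.1 hchain hirr hℓ
  · obtain ⟨ℓ, hℓ⟩ := MarkovChain.exists_tabooSum_self_lt_top hP.1 hinv hgnn hsum
    exact MarkovChain.tabooSum_lt_top_of_tabooSum_self_lt_top hP.1 hchain hirr hℓ
end
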